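/- arXiv:1705.09494 — 7 statements merged into one kernel-verified Lean document; each statement's English description precedes it below -/
import Mathlib

section
/- Let a, c, d, e > 0 and b ∈ ℝ, and suppose g(x) = a|x|^b e^{-c|x|^d}(1 + O(1/|x|^e)) as x → -∞. Define y(u) = -{ (-b/(cd)) log( ((cd/|b|)(u/a)^{d/b}) / |log((cd/|b|) u^{d/b})| ) }^{1/d} for small u > 0 (assuming b ≠ 0). Then as x → -∞, y(g(x)) = x(1 + O(log|x|/|x|^{2d})) if d ≤ e, and y(g(x)) = x(1 + O(1/|x|^{d+e})) if d > e. -/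
/-!
Write `t = |x|` and `g x = a t^b exp(-c t^d) (1 + δ)` with `δ = O(t^(-e))`. Taking logarithms,
`log (B g^(d/b)) = -(c d / b) t^d (1 + ρ)` with `B = c d / |b|` and `ρ = O(log t / t^d)`; in the
argument of the outer power in `y (g x)` the terms `B`, `log t` and `t^d` then cancel exactly,
leaving `t^d (1 + η)` with `t^d η = -log (1 + δ) / c + b / (c d) · log (1 + ρ)`. So
`y (g x) - x = -t ((1 + η)^(1/d) - 1) = O(t η)` and `η = O(max(t^(-e), log t / t^d) / t^d)`;
which of the two rates dominates is decided by the sign of `d - e`.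
-/

open Filter Topology Asymptotics Real

section
variable {α : Type*} {l : Filter α} {f : α → ℝ}

lemma isBigO_log_one_add (hf : Tendsto f l (𝓝 0)) : (fun i => log (1 + f i)) =O[l] f := by
  have h : HasDerivAt (fun x : ℝ => log (1 + x)) 1 0 := by
    simpa using ((hasDerivAt_id (0:ℝ)).const_add 1).log (by norm_num)
  have h0 := h.isBigO_sub
  simp only [add_zero, log_one, sub_zero] at h0
  exact h0.comp_tendsto hf

lemma isBigO_one_add_rpow_sub_one (p : ℝ) (hf : Tendsto f l (𝓝 0)) :
    (fun i => (1 + f i) ^ p - 1) =O[l] f := by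
  have h : HasDerivAt (fun x : ℝ => (1 + x) ^ p) p 0 := by
    simpa using ((hasDerivAt_id (0:ℝ)).const_add 1).rpow_const (p := p) (by norm_num)
  have h0 := h.isBigO_sub
  simp only [add_zero, one_rpow, sub_zero] at h0
  exact h0.comp_tendsto hf

lemma eventually_one_add_pos (hf : Tendsto f l (𝓝 0)) : ∀ᶠ i in l, 0 < 1 + f i :=
  (tendsto_const_nhds.add hf).eventually (lt_mem_nhds (by norm_num : (0:ℝ) < 1 + 0))

lemma sub_one_isBigO_inv_of_sub_isBigO_div {G h : α → ℝ}
    (hfG : (fun i => f i - G i) =O[l] fun i => G i / h i) (hG : ∀ᶠ i in l, G i ≠ 0) :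
    (fun i => f i / G i - 1) =O[l] fun i => (h i)⁻¹ := by
  refine (hfG.mul (isBigO_refl (fun i => (G i)⁻¹) l)).congr' ?_ ?_ <;>
    filter_upwards [hG] with i hi <;> field_simp
end

noncomputable def ggQuantileApprox (a b c d u : ℝ) : ℝ :=
  -((-b / (c * d)) *
    log ((c * d / |b| * (u / a) ^ (d / b)) / |log (c * d / |b| * u ^ (d / b))|)) ^ (1 / d)

section
variable {a b c d t δ : ℝ}

lemma log_const_mul_tail_rpow {K : ℝ} (hK : 0 < K) (ha : 0 < a) (hb : b ≠ 0) (ht : 0 < t)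
    (hδ : 0 < 1 + δ) :
    log (K * (a * t ^ b * exp (-c * t ^ d) * (1 + δ)) ^ (d / b)) =
      log K + d / b * log a + d * log t + d / b * log (1 + δ) - c * d / b * t ^ d := by
  have hu : 0 < a * t ^ b * exp (-c * t ^ d) * (1 + δ) := by positivity
  rw [log_mul hK.ne' (rpow_pos_of_pos hu _).ne', log_rpow hu, log_mul (by positivity) hδ.ne',
    log_mul (by positivity) (exp_pos _).ne', log_mul ha.ne' (rpow_pos_of_pos ht _).ne',
    log_rpow ht, log_exp]
  field_simp
  ring

lemma ggQuantileApprox_tail_eq {ρ η : ℝ} (ha : 0 < a) (hc : 0 < c) (hd : 0 < d) (hb : b ≠ 0)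
    (ht : 0 < t) (hδ : 0 < 1 + δ) (hρ : 0 < 1 + ρ) (hη : 0 ≤ 1 + η)
    (hρ_def : -(c * d / b) * t ^ d * ρ =
      log (c * d / |b|) + d / b * log a + d * log t + d / b * log (1 + δ))
    (hη_def : t ^ d * η = -c⁻¹ * log (1 + δ) + b / (c * d) * log (1 + ρ)) :
    ggQuantileApprox a b c d (a * t ^ b * exp (-c * t ^ d) * (1 + δ)) =
      -(t * (1 + η) ^ (1 / d)) := by
  set u := a * t ^ b * exp (-c * t ^ d) * (1 + δ)
  have hB : 0 < c * d / |b| := by positivity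
  have htd : 0 < t ^ d := rpow_pos_of_pos ht d
  have hL : |log (c * d / |b| * u ^ (d / b))| = c * d / |b| * t ^ d * (1 + ρ) := by
    have hL' : log (c * d / |b| * u ^ (d / b)) = -(c * d / b) * t ^ d * (1 + ρ) := by
      rw [log_const_mul_tail_rpow hB ha hb ht hδ]
      linear_combination -hρ_def
    rw [hL', abs_mul, abs_mul, abs_neg, abs_div, abs_of_pos (by positivity : 0 < c * d),
      abs_of_pos htd, abs_of_pos hρ]
  have hnum : log (c * d / |b| * (u / a) ^ (d / b)) =
      log (c * d / |b|) + d * log t + d / b * log (1 + δ) - c * d / b * t ^ d := by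
    have hua : u / a = 1 * t ^ b * exp (-c * t ^ d) * (1 + δ) := by simp only [u]; field_simp
    rw [hua, log_const_mul_tail_rpow hB one_pos hb ht hδ, log_one, mul_zero, add_zero]
  have hinner : -b / (c * d) * log (c * d / |b| * (u / a) ^ (d / b) /
      |log (c * d / |b| * u ^ (d / b))|) = t ^ d * (1 + η) := by
    rw [log_div (by positivity) (by rw [hL]; positivity), hnum, hL, log_mul (by positivity) hρ.ne',
      log_mul hB.ne' htd.ne', log_rpow ht]
    linear_combination (norm := skip) -hη_def
    field_simp
    ring
  rw [ggQuantileApprox, hinner, mul_rpow htd.le hη, ← rpow_mul ht.le, mul_one_div_cancel hd.ne',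
    rpow_one]
end

section
variable {α : Type*} {l : Filter α} {t δ r : α → ℝ} {a b c d : ℝ}

theorem ggQuantileApprox_tail_add_isBigO (ha : 0 < a) (hc : 0 < c) (hd : 0 < d) (hb : b ≠ 0)
    (ht : Tendsto t l atTop) (hδ : δ =O[l] r) (hr : Tendsto r l (𝓝 0))
    (hlog : (fun i => log (t i) / t i ^ d) =O[l] r) :
    (fun i => ggQuantileApprox a b c d (a * t i ^ b * exp (-c * t i ^ d) * (1 + δ i)) + t i)
      =O[l] fun i => t i * (r i / t i ^ d) := by
  set R := fun i => log (c * d / |b|) + d / b * log a + d * log (t i) + d / b * log (1 + δ i)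
  set ρ := fun i => -(b / (c * d)) * (R i / t i ^ d)
  set E := fun i => -c⁻¹ * log (1 + δ i) + b / (c * d) * log (1 + ρ i)
  set η := fun i => E i / t i ^ d
  have hδ0 := hδ.trans_tendsto hr
  have hlogt : Tendsto (fun i => log (t i)) l atTop := tendsto_log_atTop.comp ht
  have hR : R =O[l] fun i => log (t i) := by
    have h1 : (fun _ => (1:ℝ)) =O[l] fun i => log (t i) :=
      ((isLittleO_one_left_iff ℝ).2 (tendsto_norm_atTop_atTop.comp hlogt)).isBigO
    have hlogδ : (fun i => log (1 + δ i)) =O[l] fun i => log (t i) :=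
      ((isBigO_log_one_add hδ0).trans_tendsto hδ0 |>.isBigO_one ℝ).trans h1
    simpa using (((h1.const_mul_left (log (c * d / |b|))).add
      (h1.const_mul_left (d / b * log a))).add ((isBigO_refl _ l).const_mul_left d)).add
      (hlogδ.const_mul_left (d / b))
  have hρ : ρ =O[l] r := by
    refine (IsBigO.const_mul_left ?_ _).trans hlog
    simpa only [div_eq_mul_inv] using hR.mul (isBigO_refl (fun i => (t i ^ d)⁻¹) l)
  have hρ0 := hρ.trans_tendsto hr
  have hE : E =O[l] r :=
    (((isBigO_log_one_add hδ0).trans hδ).const_mul_left _).add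
      (((isBigO_log_one_add hρ0).trans hρ).const_mul_left _)
  have hη : η =O[l] fun i => r i / t i ^ d := by
    simpa only [η, div_eq_mul_inv] using hE.mul (isBigO_refl (fun i => (t i ^ d)⁻¹) l)
  have hη0 : Tendsto η l (𝓝 0) :=
    (hE.trans_tendsto hr).div_atTop ((tendsto_rpow_atTop hd).comp ht)
  have heq : (fun i => -(t i * ((1 + η i) ^ (1 / d) - 1))) =ᶠ[l]
      fun i => ggQuantileApprox a b c d (a * t i ^ b * exp (-c * t i ^ d) * (1 + δ i)) + t i := by
    filter_upwards [ht.eventually_gt_atTop 0, eventually_one_add_pos hδ0,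
      eventually_one_add_pos hρ0, eventually_one_add_pos hη0] with i hti hδi hρi hηi
    have htd : t i ^ d ≠ 0 := (rpow_pos_of_pos hti d).ne'
    rw [ggQuantileApprox_tail_eq ha hc hd hb hti hδi hρi hηi.le]
    · ring
    · simp only [ρ, R]; field_simp
    · simp only [η, E]; field_simp
  exact (((isBigO_refl t l).mul (isBigO_one_add_rpow_sub_one (1 / d) hη0)).neg_left.trans
    ((isBigO_refl t l).mul hη)).congr' heq EventuallyEq.rfl
end

lemma rpow_neg_isBigO_log_div_rpow {d e : ℝ} (hde : d ≤ e) :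
    (fun t : ℝ => t ^ (-e)) =O[atTop] fun t => log t / t ^ d := by
  refine IsBigO.of_bound 1 ?_
  filter_upwards [eventually_ge_atTop (exp 1)] with t ht
  have ht1 : 1 ≤ t := (one_le_exp zero_le_one).trans ht
  have hlog : 1 ≤ log t := by rwa [le_log_iff_exp_le (by linarith)]
  have htd : 0 < t ^ d := rpow_pos_of_pos (by linarith) d
  rw [norm_of_nonneg (by positivity), norm_of_nonneg (by positivity), one_mul,
    rpow_neg (by linarith), ← one_div, div_le_div_iff₀ (by positivity) htd, one_mul]
  calc t ^ d ≤ t ^ e := rpow_le_rpow_of_exponent_le ht1 hde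
    _ ≤ log t * t ^ e := le_mul_of_one_le_left (by positivity) hlog

lemma log_div_rpow_isBigO_rpow_neg {d e : ℝ} (hde : e < d) :
    (fun t : ℝ => log t / t ^ d) =O[atTop] fun t => t ^ (-e) := by
  have h := ((isLittleO_log_rpow_atTop (sub_pos.2 hde)).isBigO).mul
    (isBigO_refl (fun t : ℝ => t ^ (-d)) atTop)
  refine h.congr' ?_ ?_
  · filter_upwards [eventually_gt_atTop 0] with t ht
    rw [rpow_neg ht.le, div_eq_mul_inv]
  · filter_upwards [eventually_gt_atTop 0] with t ht
    rw [← rpow_add ht]; ring_nf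

theorem ggQuantileApprox_comp_sub_isBigO {g r : ℝ → ℝ} {a b c d : ℝ} (ha : 0 < a)
    (hc : 0 < c) (hd : 0 < d) (hb : b ≠ 0)
    (hg : (fun x => g x / (a * |x| ^ b * exp (-c * |x| ^ d)) - 1) =O[atBot] r)
    (hr : Tendsto r atBot (𝓝 0)) (hlog : (fun x => log |x| / |x| ^ d) =O[atBot] r) :
    (fun x => ggQuantileApprox a b c d (g x) - x) =O[atBot] fun x => |x| * (r x / |x| ^ d) := by
  refine (ggQuantileApprox_tail_add_isBigO ha hc hd hb tendsto_abs_atBot_atTop hg hr hlog).congr' ?_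
    EventuallyEq.rfl
  filter_upwards [eventually_lt_atBot 0] with x hx
  have hG : a * |x| ^ b * exp (-c * |x| ^ d) ≠ 0 := by
    have := abs_pos.2 hx.ne
    positivity
  rw [mul_add, mul_one, mul_sub, mul_one, mul_div_cancel₀ _ hG, add_sub_cancel, abs_of_neg hx,
    sub_eq_add_neg]

/-- Accuracy of the closed-form approximation to the Generalised Gamma-type
lower tail quantile, composed with the cdf. -/
theorem gg_lower_tail_approx_accuracy
    (g y : ℝ → ℝ) (a b c d e : ℝ)
    (ha : 0 < a) (hc : 0 < c) (hd : 0 < d) (he : 0 < e) (hb : b ≠ 0)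
    (hg_tail : (fun x => g x - a * |x| ^ b * Real.exp (-c * |x| ^ d)) =O[atBot]
      (fun x => a * |x| ^ b * Real.exp (-c * |x| ^ d) / |x| ^ e))
    (hy : ∀ u, y u =
      -((-b / (c * d)) *
        Real.log ((c * d / |b| * (u / a) ^ (d / b)) /
          |Real.log (c * d / |b| * u ^ (d / b))|)) ^ (1 / d)) :
    ((d ≤ e → (fun x => y (g x) - x) =O[atBot]
        (fun x => x * (Real.log |x| / |x| ^ (2 * d)))) ∧
     (d > e → (fun x => y (g x) - x) =O[atBot]
        (fun x => x * (1 / |x| ^ (d + e))))) := by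
  obtain rfl : y = ggQuantileApprox a b c d := funext hy
  have habs := tendsto_abs_atBot_atTop (G := ℝ)
  have hneg : ∀ᶠ x : ℝ in atBot, x < 0 := eventually_lt_atBot 0
  have hδ : (fun x => g x / (a * |x| ^ b * exp (-c * |x| ^ d)) - 1) =O[atBot]
      fun x => |x| ^ (-e) := by
    refine (sub_one_isBigO_inv_of_sub_isBigO_div hg_tail ?_).congr_right fun x => ?_
    · filter_upwards [hneg] with x hx
      have := abs_pos.2 hx.ne
      positivity
    · rw [rpow_neg (abs_nonneg x)]
  constructor
  · intro hde
    refine ((ggQuantileApprox_comp_sub_isBigO ha hc hd hb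
      (hδ.trans ((rpow_neg_isBigO_log_div_rpow hde).comp_tendsto habs))
      ((isLittleO_log_rpow_atTop hd).tendsto_div_nhds_zero.comp habs)
      (isBigO_refl _ _)).congr' EventuallyEq.rfl ?_).of_neg_right
    filter_upwards [hneg] with x hx
    rw [Function.comp_apply, two_mul, rpow_add (abs_pos.2 hx.ne), div_div, abs_of_neg hx]
    ring
  · intro hde
    refine ((ggQuantileApprox_comp_sub_isBigO ha hc hd hb hδ
      ((tendsto_rpow_neg_atTop he).comp habs)
      ((log_div_rpow_isBigO_rpow_neg hde).comp_tendsto habs)).congr'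
      EventuallyEq.rfl ?_).of_neg_right
    filter_upwards [hneg] with x hx
    have hx' := abs_pos.2 hx.ne
    rw [rpow_add hx', rpow_neg hx'.le, abs_of_neg hx]
    field_simp
end

section
/- Let a, c, d > 0 and b ∈ ℝ, b ≠ 0, and define y(u) = -{ (-b/(cd)) log( ((cd/|b|)(u/a)^{d/b}) / |log((cd/|b|) u^{d/b})| ) }^{1/d}. Then as u → 0⁺, y(u) = -(-(1/c) log u)^{1/d} [ 1 - (b log|log u|)/(d² log u) - (b log(a^{d/b}/c))/(d² log u) + (b²/(2d³))(1/d - 1)(log|log u|)²/(log u)² + O(log|log u|/|log u|²) ]. -/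
open Filter Topology Asymptotics Real

/-!
Put `s = -log u`, so `s → ∞` as `u → 0⁺`. The base of the outer power is exactly `(s/c)(1 + ε s)`
with `ε s = (b/d)(log s + B + log (1 - A/s))/s`, `A = b log(cd/|b|)/d`, `B = log(a^{d/b}/c)`; since
`log (1 - A/s) = O(1/s)`, `ε s = (b/d)(log s + B)/s + O(1/s²)` and in particular `ε = O(log s/s)`.
The binomial series gives `(1 + ε)^p = 1 + pε + p(p-1)/2 ε² + O(ε³)`. Here `ε³ = O(log s/s²)`
because `log² s/s → 0`, and replacing `ε²` by `(b/d)² log² s/s²` costs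
`(ε - (b/d) log s/s)(ε + (b/d) log s/s) = O(1/s) O(log s/s)`.
-/

lemma Ring.choose_two_eq {K : Type*} [Field K] [CharZero K] (p : K) :
    Ring.choose p 2 = p * (p - 1) / 2 := by
  simp [Ring.choose_eq_smul, Polynomial.descPochhammer_smeval_eq_ascPochhammer,
    Polynomial.ascPochhammer_smeval_eq_eval, ascPochhammer_succ_eval]
  ring

lemma binomialSeries_partialSum_three (p x : ℝ) :
    (binomialSeries ℝ p).partialSum 3 x = 1 + p * x + p * (p - 1) / 2 * x ^ 2 := by
  simp only [FormalMultilinearSeries.partialSum, Finset.sum_range_succ, binomialSeries,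
    FormalMultilinearSeries.ofScalars_apply_eq, Ring.choose_two_eq]
  simp

lemma one_add_rpow_sub_quadratic_isBigO (p : ℝ) :
    (fun x : ℝ => (1 + x) ^ p - (1 + p * x + p * (p - 1) / 2 * x ^ 2)) =O[𝓝 0]
      (fun x => x ^ 3) := by
  have h := (one_add_rpow_hasFPowerSeriesAt_zero (a := p)).isBigO_sub_partialSum_pow 3
  simp only [zero_add, binomialSeries_partialSum_three, norm_eq_abs, ← abs_pow] at h
  exact h.of_abs_right

lemma log_one_sub_div_isBigO_inv (A : ℝ) :
    (fun s : ℝ => log (1 - A / s)) =O[atTop] (fun s => s⁻¹) := by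
  have hlog : (fun x => log x - log 1) =O[𝓝 1] (fun x => x - 1) :=
    (hasDerivAt_log one_ne_zero).isBigO_sub
  have hlim : Tendsto (fun s : ℝ => 1 - A / s) atTop (𝓝 1) := by
    simpa using tendsto_const_nhds.sub ((tendsto_const_nhds (x := A)).div_atTop tendsto_id)
  refine ((hlog.comp_tendsto hlim).congr (fun s => by simp) (fun s => ?_)).trans
    ((isBigO_refl _ _).const_mul_left (-A))
  simp [div_eq_mul_inv]

lemma inv_isBigO_log_div_atTop : (fun s : ℝ => s⁻¹) =O[atTop] (fun s => log s / s) := by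
  simpa [div_eq_mul_inv] using
    (isLittleO_const_log_atTop (c := 1)).isBigO.mul (isBigO_refl (fun s : ℝ => s⁻¹) atTop)

lemma tendsto_log_div_atTop : Tendsto (fun s : ℝ => log s / s) atTop (𝓝 0) :=
  isLittleO_log_id_atTop.tendsto_div_nhds_zero

lemma log_div_pow_three_isBigO_log_div_sq :
    (fun s : ℝ => (log s / s) ^ 3) =O[atTop] (fun s => log s / s ^ 2) := by
  have hbdd : (fun s : ℝ => log s ^ 2 / s) =O[atTop] (fun _ => (1 : ℝ)) :=
    (isLittleO_pow_log_id_atTop (n := 2)).tendsto_div_nhds_zero.isBigO_one ℝ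
  refine ((isBigO_refl (fun s : ℝ => log s / s ^ 2) atTop).mul hbdd).congr' ?_ (by simp)
  filter_upwards [eventually_ne_atTop 0] with s hs
  field_simp

lemma log_div_sq_isBigO_inv : (fun s : ℝ => log s / s ^ 2) =O[atTop] (fun s => s⁻¹) := by
  refine (tendsto_log_div_atTop.isBigO_one ℝ |>.mul (isBigO_refl (fun s : ℝ => s⁻¹) atTop))
    |>.congr (fun s => by ring) (fun s => one_mul _)

lemma log_div_sq_isBigO_log_div : (fun s : ℝ => log s / s ^ 2) =O[atTop] (fun s => log s / s) :=
  log_div_sq_isBigO_inv.trans inv_isBigO_log_div_atTop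

section ExpansionAtTop

variable {k B : ℝ} {ε : ℝ → ℝ}

lemma isBigO_log_div_of_sub_isBigO
    (hε : (fun s => ε s - k * ((log s + B) / s)) =O[atTop] (fun s => log s / s ^ 2)) :
    ε =O[atTop] (fun s => log s / s) := by
  have hmain : (fun s => k * ((log s + B) / s)) =O[atTop] (fun s => log s / s) := by
    refine IsBigO.const_mul_left ?_ k
    refine ((isBigO_refl _ _).add (inv_isBigO_log_div_atTop.const_mul_left B)).congr_left
      (fun s => ?_)
    ring
  exact ((hε.trans log_div_sq_isBigO_log_div).add hmain).congr_left (fun s => sub_add_cancel _ _)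

lemma one_add_rpow_sub_expansion_isBigO (p : ℝ)
    (hε : (fun s => ε s - k * ((log s + B) / s)) =O[atTop] (fun s => log s / s ^ 2)) :
    (fun s => (1 + ε s) ^ p - (1 + p * k * ((log s + B) / s)
        + p * (p - 1) / 2 * k ^ 2 * (log s ^ 2 / s ^ 2))) =O[atTop] (fun s => log s / s ^ 2) := by
  have hε' := isBigO_log_div_of_sub_isBigO hε
  have hcubic : (fun s => (1 + ε s) ^ p - (1 + p * ε s + p * (p - 1) / 2 * ε s ^ 2))
      =O[atTop] (fun s => log s / s ^ 2) :=
    ((one_add_rpow_sub_quadratic_isBigO p).comp_tendsto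
      (hε'.trans_tendsto tendsto_log_div_atTop)).trans
      ((hε'.pow 3).trans log_div_pow_three_isBigO_log_div_sq)
  have hminus : (fun s => ε s - k * (log s / s)) =O[atTop] (fun s => s⁻¹) :=
    ((hε.trans log_div_sq_isBigO_inv).add ((isBigO_refl _ _).const_mul_left (k * B))).congr_left
      (fun s => by ring)
  have hplus : (fun s => ε s + k * (log s / s)) =O[atTop] (fun s => log s / s) :=
    hε'.add ((isBigO_refl _ _).const_mul_left k)
  have hsquare : (fun s => ε s ^ 2 - k ^ 2 * (log s ^ 2 / s ^ 2))
      =O[atTop] (fun s => log s / s ^ 2) :=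
    (hminus.mul hplus).congr (fun s => by ring) (fun s => by ring)
  refine ((hcubic.add (hε.const_mul_left p)).add (hsquare.const_mul_left (p * (p - 1) / 2)))
    |>.congr_left (fun s => by ring)

end ExpansionAtTop

lemma quantile_base_eq {a b c d u s : ℝ} (ha : 0 < a) (hc : 0 < c) (hd : 0 < d) (hb : b ≠ 0)
    (hu : 0 < u) (hs : log u = -s) (hs0 : s ≠ 0) (hsA : s ≠ b * log (c * d / |b|) / d) :
    (-b / (c * d)) * log ((c * d / |b| * (u / a) ^ (d / b)) / |log (c * d / |b| * u ^ (d / b))|)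
      = s / c * (1 + b / d * ((log s + log (a ^ (d / b) / c)
          + log (1 - b * log (c * d / |b|) / d / s)) / s)) := by
  set A := b * log (c * d / |b|) / d with hA
  have hfactor0 : 1 - A / s ≠ 0 := by
    rw [one_sub_div hs0]
    exact div_ne_zero (sub_ne_zero.2 hsA) hs0
  have hden : log (c * d / |b| * u ^ (d / b)) = -(d / b) * s * (1 - A / s) := by
    rw [log_mul (by positivity) (rpow_pos_of_pos hu _).ne', log_rpow hu, hs, hA]
    field_simp
    ring
  have hlogden : log |log (c * d / |b| * u ^ (d / b))|
      = log d - log b + log s + log (1 - A / s) := by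
    rw [log_abs, hden, log_mul (by simp [hd.ne', hb, hs0]) hfactor0,
      log_mul (by simp [hd.ne', hb]) hs0, log_neg_eq_log, log_div hd.ne' hb]
  have hlognum : log (c * d / |b| * (u / a) ^ (d / b))
      = log c + log d - log b + d / b * (-s - log a) := by
    rw [log_mul (by positivity) (rpow_pos_of_pos (div_pos hu ha) _).ne', log_rpow (div_pos hu ha),
      log_div hu.ne' ha.ne', hs, log_div (by positivity) (abs_pos.mpr hb).ne',
      log_mul hc.ne' hd.ne', log_abs]
  rw [log_div (by positivity) (by simp [hden, hd.ne', hb, hs0, hfactor0]), hlognum, hlogden,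
    log_div (rpow_pos_of_pos ha _).ne' hc.ne', log_rpow ha]
  field_simp
  ring

/-- Asymptotic expansion of the closed-form quantile approximation y(u) for
Generalised Gamma-type tails. -/
theorem gg_y_expansion
    (y : ℝ → ℝ) (a b c d : ℝ)
    (ha : 0 < a) (hc : 0 < c) (hd : 0 < d) (hb : b ≠ 0)
    (hy : ∀ u, y u =
      -((-b / (c * d)) *
        Real.log ((c * d / |b| * (u / a) ^ (d / b)) /
          |Real.log (c * d / |b| * u ^ (d / b))|)) ^ (1 / d)) :
    (fun u => y u -
      (-(-(1 / c) * Real.log u) ^ (1 / d) *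
        (1 - b * Real.log |Real.log u| / (d ^ 2 * Real.log u)
           - b * Real.log (a ^ (d / b) / c) / (d ^ 2 * Real.log u)
           + (b ^ 2 / (2 * d ^ 3)) * (1 / d - 1) *
               (Real.log |Real.log u|) ^ 2 / (Real.log u) ^ 2)))
      =O[𝓝[>] (0:ℝ)]
    (fun u => (-(1 / c) * Real.log u) ^ (1 / d) *
      (Real.log |Real.log u| / |Real.log u| ^ 2)) := by
  set A := b * log (c * d / |b|) / d
  set B := log (a ^ (d / b) / c)
  set ε : ℝ → ℝ := fun s => b / d * ((log s + B + log (1 - A / s)) / s) with hε_def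
  have hφ : Tendsto (fun u => -log u) (𝓝[>] 0) atTop :=
    tendsto_neg_atBot_atTop.comp tendsto_log_nhdsGT_zero
  have hε : (fun s => ε s - b / d * ((log s + B) / s)) =O[atTop] (fun s => log s / s ^ 2) :=
    (((log_one_sub_div_isBigO_inv A).trans inv_isBigO_log_div_atTop).mul
      (isBigO_refl (fun s : ℝ => s⁻¹) atTop)).const_mul_left (b / d)
      |>.congr (fun s => by simp only [hε_def]; ring) (fun s => by ring)
  have hε0 : Tendsto ε atTop (𝓝 0) :=
    (isBigO_log_div_of_sub_isBigO hε).trans_tendsto tendsto_log_div_atTop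
  have hexp := (one_add_rpow_sub_expansion_isBigO (1 / d) hε).comp_tendsto hφ
  refine (hexp.neg_left.mul (isBigO_refl (fun u => (-(1 / c) * log u) ^ (1 / d)) _)).congr' ?_ ?_
  · filter_upwards [self_mem_nhdsWithin, hφ.eventually (eventually_gt_atTop 0),
      hφ.eventually (eventually_ne_atTop A),
      hφ.eventually (hε0.eventually (Ioi_mem_nhds neg_one_lt_zero))] with u hu hs0 hsA hε1
    set s := -log u with hs
    have hlog : log u = -s := by simp [hs]
    simp only [Function.comp_apply]
    rw [hy u, quantile_base_eq ha hc hd hb hu hlog hs0.ne' hsA,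
      mul_rpow (div_pos hs0 hc).le (by linarith), hlog]
    simp only [hε_def, neg_neg, abs_neg, abs_of_pos hs0, show -(1 / c) * -s = s / c by ring]
    ring
  · refine .of_forall fun u => ?_
    simp only [Function.comp_apply, log_neg_eq_log, log_abs, sq_abs, neg_sq]
    ring
end

section
/- Let Φ denote the standard Normal cdf. Then Φ^{-1}(u) = y(u)(1 + O(log|log u|/(log u)²)) as u → 0⁺, where y(u) = -√(-2 log(u √(4π|log u|))). -/
/-!
Write `x = Φ⁻¹(u)`, `A = -log u` and `φ(t) = exp (-t²/2)`. Integrating `φ(t) (-t) / |x|` and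
`φ(t) (1 + 1/t²)`, the derivatives of `φ` and `-φ(t)/t`, over `t ≤ x` gives the Mills-ratio
bounds `φ(x)/|x| / (1 + 1/x²) ≤ √(2π) Φ(x) ≤ φ(x)/|x|`, i.e.
`x² + log x² + log 2π = 2A + O(1/x²)`. Solving `s + log s ≈ 2A - log 2π` for `s = x²` gives
`x² = 2A - log (4πA) + O(log A / A) = y² + O(log A / A)` with `y = -√(2A - log (4πA))`, and
`|x - y| |y| ≤ |x² - y²|` for `x, y ≤ 0` turns this into `x - y = O(log A / A^{3/2})`,
which is `O(|y| log A / A²)`.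
-/

open Filter Topology Asymptotics Real MeasureTheory Set

namespace NormalQuantile

lemma integrable_exp_neg_sq_div_two : Integrable fun t : ℝ => exp (-t ^ 2 / 2) := by
  simpa [neg_div, div_eq_inv_mul] using integrable_exp_neg_mul_sq (b := 2⁻¹) (by norm_num)

lemma integrable_exp_neg_sq_div_two_mul_neg : Integrable fun t : ℝ => exp (-t ^ 2 / 2) * -t := by
  simpa [neg_div, div_eq_inv_mul, mul_comm] using
    (integrable_mul_exp_neg_mul_sq (b := 2⁻¹) (by norm_num)).neg

lemma hasDerivAt_exp_neg_sq_div_two (t : ℝ) :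
    HasDerivAt (fun s : ℝ => exp (-s ^ 2 / 2)) (exp (-t ^ 2 / 2) * -t) t :=
  ((hasDerivAt_pow 2 t).neg.div_const 2).exp.congr_deriv (by simp; ring)

lemma tendsto_exp_neg_sq_div_two_atBot :
    Tendsto (fun t : ℝ => exp (-t ^ 2 / 2)) atBot (𝓝 0) := by
  refine tendsto_exp_atBot.comp ?_
  have := ((tendsto_pow_atTop two_ne_zero).comp tendsto_neg_atBot_atTop).atTop_div_const
    (two_pos : (0:ℝ) < 2)
  simpa [neg_div, Function.comp_def] using tendsto_neg_atTop_atBot.comp this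

theorem integral_Iic_exp_neg_sq_div_two_le {x : ℝ} (hx : x < 0) :
    ∫ t in Iic x, exp (-t ^ 2 / 2) ≤ exp (-x ^ 2 / 2) / -x := by
  have hftc : ∫ t in Iic x, exp (-t ^ 2 / 2) * -t = exp (-x ^ 2 / 2) := by
    simpa using integral_Iic_of_hasDerivAt_of_tendsto'
      (fun t _ => hasDerivAt_exp_neg_sq_div_two t)
      integrable_exp_neg_sq_div_two_mul_neg.integrableOn tendsto_exp_neg_sq_div_two_atBot
  rw [← hftc, ← integral_div]
  refine setIntegral_mono_on integrable_exp_neg_sq_div_two.integrableOn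
    (integrable_exp_neg_sq_div_two_mul_neg.div_const _).integrableOn measurableSet_Iic
    fun t ht => ?_
  rw [mul_div_assoc, le_mul_iff_one_le_right (exp_pos _), one_le_div (neg_pos.2 hx)]
  exact neg_le_neg ht

lemma hasDerivAt_neg_exp_neg_sq_div_two_div {t : ℝ} (ht : t ≠ 0) :
    HasDerivAt (fun s : ℝ => -(exp (-s ^ 2 / 2) / s)) (exp (-t ^ 2 / 2) * (1 + 1 / t ^ 2)) t :=
  ((hasDerivAt_exp_neg_sq_div_two t).div (hasDerivAt_id' t) ht).neg.congr_deriv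
    (by field_simp; ring)

lemma tendsto_neg_exp_neg_sq_div_two_div_atBot :
    Tendsto (fun s : ℝ => -(exp (-s ^ 2 / 2) / s)) atBot (𝓝 0) := by
  simpa [div_eq_mul_inv] using (tendsto_exp_neg_sq_div_two_atBot.mul tendsto_inv_atBot_zero).neg

theorem exp_neg_sq_div_two_div_le_integral_Iic {x : ℝ} (hx : x < 0) :
    exp (-x ^ 2 / 2) / -x ≤ (1 + 1 / x ^ 2) * ∫ t in Iic x, exp (-t ^ 2 / 2) := by
  have hbound : ∀ t ∈ Iic x,
      exp (-t ^ 2 / 2) * (1 + 1 / t ^ 2) ≤ exp (-t ^ 2 / 2) * (1 + 1 / x ^ 2) := by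
    intro t (ht : t ≤ x)
    gcongr ?_ * (1 + ?_)
    exact one_div_le_one_div_of_le (by nlinarith) (by nlinarith)
  have hint : IntegrableOn (fun t => exp (-t ^ 2 / 2) * (1 + 1 / t ^ 2)) (Iic x) := by
    refine (integrable_exp_neg_sq_div_two.mul_const (1 + 1 / x ^ 2)).integrableOn.mono'
      (by fun_prop) ((ae_restrict_iff' measurableSet_Iic).2 (ae_of_all _ fun t ht => ?_))
    rw [norm_of_nonneg (by positivity)]
    exact hbound t ht
  have hftc : ∫ t in Iic x, exp (-t ^ 2 / 2) * (1 + 1 / t ^ 2) = exp (-x ^ 2 / 2) / -x := by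
    rw [integral_Iic_of_hasDerivAt_of_tendsto'
      (fun t (ht : t ∈ Iic x) => hasDerivAt_neg_exp_neg_sq_div_two_div (ht.out.trans_lt hx).ne)
      hint tendsto_neg_exp_neg_sq_div_two_div_atBot]
    ring
  rw [mul_comm, ← integral_mul_const, ← hftc]
  exact setIntegral_mono_on hint (integrable_exp_neg_sq_div_two.mul_const _).integrableOn
    measurableSet_Iic hbound

noncomputable def stdNormalCDF (x : ℝ) : ℝ := ∫ t in Iic x, exp (-t ^ 2 / 2) / √(2 * π)

lemma stdNormalCDF_eq (x : ℝ) :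
    stdNormalCDF x = (∫ t in Iic x, exp (-t ^ 2 / 2)) / √(2 * π) :=
  integral_div _ _

lemma stdNormalCDF_pos (x : ℝ) : 0 < stdNormalCDF x := by
  rw [stdNormalCDF_eq]
  refine div_pos ?_ (by positivity)
  rw [setIntegral_pos_iff_support_of_nonneg_ae (ae_of_all _ fun t => (exp_pos _).le)
    integrable_exp_neg_sq_div_two.integrableOn]
  simp [Function.support, exp_ne_zero]

lemma monotone_stdNormalCDF : Monotone stdNormalCDF := fun a b hab => by
  simp only [stdNormalCDF_eq]
  gcongr ?_ / _
  exact setIntegral_mono_set integrable_exp_neg_sq_div_two.integrableOn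
    (ae_of_all _ fun t => (exp_pos _).le) (Iic_subset_Iic.2 hab).eventuallyLE

theorem le_neg_two_mul_log_stdNormalCDF {x : ℝ} (hx : x < 0) :
    x ^ 2 + log (x ^ 2) + log (2 * π) ≤ -2 * log (stdNormalCDF x) := by
  have hx' : 0 < -x := neg_pos.2 hx
  have hle : stdNormalCDF x ≤ exp (-x ^ 2 / 2) / -x / √(2 * π) := by
    rw [stdNormalCDF_eq]
    gcongr
    exact integral_Iic_exp_neg_sq_div_two_le hx
  have hlog := log_le_log (stdNormalCDF_pos x) hle
  rw [log_div (div_pos (exp_pos _) hx').ne' (by positivity), log_div (exp_pos _).ne' hx'.ne',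
    log_exp, log_sqrt (by positivity)] at hlog
  have hlog_sq : log (x ^ 2) = 2 * log (-x) := by rw [← neg_sq, log_pow]; push_cast; rfl
  linarith

theorem neg_two_mul_log_stdNormalCDF_le {x : ℝ} (hx : x < 0) :
    -2 * log (stdNormalCDF x) ≤ x ^ 2 + log (x ^ 2) + log (2 * π) + 2 / x ^ 2 := by
  have hx' : 0 < -x := neg_pos.2 hx
  have hc : 0 < exp (-x ^ 2 / 2) / -x := div_pos (exp_pos _) hx'
  have hx2 : 0 < 1 + 1 / x ^ 2 := by positivity
  have hle : exp (-x ^ 2 / 2) / -x / √(2 * π) / (1 + 1 / x ^ 2) ≤ stdNormalCDF x := by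
    rw [stdNormalCDF_eq, div_right_comm, div_le_div_iff_of_pos_right (by positivity),
      div_le_iff₀' hx2]
    exact exp_neg_sq_div_two_div_le_integral_Iic hx
  have hlog := log_le_log (by positivity) hle
  rw [log_div (by positivity) hx2.ne', log_div hc.ne' (by positivity),
    log_div (exp_pos _).ne' hx'.ne', log_exp, log_sqrt (by positivity)] at hlog
  have hlog_sq : log (x ^ 2) = 2 * log (-x) := by rw [← neg_sq, log_pow]; push_cast; rfl
  have hlog_le : log (1 + 1 / x ^ 2) ≤ 1 / x ^ 2 := by
    linarith [log_le_sub_one_of_pos hx2]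
  have : 2 / x ^ 2 = 2 * (1 / x ^ 2) := by ring
  linarith

lemma log_two_pi_lt_two : log (2 * π) < 2 := by
  rw [log_lt_iff_lt_exp (by positivity), show (2 : ℝ) = 1 + 1 by norm_num, exp_add]
  nlinarith [exp_one_gt_d9, pi_lt_d2]

section Inversion

variable {s A : ℝ}

lemma le_two_mul_of_add_log_le (hs : 1 ≤ s) (hlo : s + log s + log (2 * π) ≤ 2 * A) :
    s ≤ 2 * A := by
  have : 0 ≤ log (2 * π) := log_nonneg (by linarith [pi_gt_three])
  linarith [log_nonneg hs]

lemma two_mul_sub_le_log_two_mul (hs : 1 ≤ s) (hlo : s + log s + log (2 * π) ≤ 2 * A)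
    (hhi : 2 * A ≤ s + log s + log (2 * π) + 2 / s) : 2 * A - s ≤ log (2 * A) + 4 := by
  have hlog : log s ≤ log (2 * A) := log_le_log (by linarith) (le_two_mul_of_add_log_le hs hlo)
  have hinv : 2 / s ≤ 2 := div_le_self zero_le_two hs
  linarith [log_two_pi_lt_two]

theorem abs_sub_two_mul_sub_log_le (hs : 1 ≤ s) (hlo : s + log s + log (2 * π) ≤ 2 * A)
    (hhi : 2 * A ≤ s + log s + log (2 * π) + 2 / s) :
    |s - (2 * A - log (4 * π * A))| ≤ (log (2 * A) + 4) / s := by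
  have hs0 : 0 < s := by linarith
  have hsA := le_two_mul_of_add_log_le hs hlo
  have hA : 0 < 2 * A := by linarith
  have hlog4 : log (4 * π * A) = log (2 * π) + log (2 * A) := by
    rw [← log_mul (by positivity) hA.ne']; ring_nf
  have hlog2A : 0 ≤ log (2 * A) := log_nonneg (by linarith)
  rw [abs_le, hlog4]
  constructor
  · have : 2 / s ≤ (log (2 * A) + 4) / s := by gcongr; linarith
    linarith [log_le_log hs0 hsA]
  · have hdiv : log (2 * A) - log s ≤ (2 * A - s) / s := by
      rw [← log_div hA.ne' hs0.ne', sub_div, div_self hs0.ne']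
      exact log_le_sub_one_of_pos (div_pos hA hs0)
    have : (2 * A - s) / s ≤ (log (2 * A) + 4) / s := by
      gcongr
      exact two_mul_sub_le_log_two_mul hs hlo hhi
    linarith

end Inversion

lemma abs_add_mul_le_abs_sq_sub_sq {x y : ℝ} (hx : x ≤ 0) (hy : 0 ≤ y) :
    |x + y| * y ≤ |x ^ 2 - y ^ 2| := by
  rw [show x ^ 2 - y ^ 2 = (x + y) * (x - y) by ring, abs_mul,
    abs_of_nonpos (by linarith : x - y ≤ 0)]
  gcongr
  linarith

theorem abs_sub_neg_sqrt_le {x A : ℝ} (hx : x ≤ -1) (hA : log (4 * π * A) + 4 ≤ A)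
    (he : exp 1 ≤ A) (hlo : x ^ 2 + log (x ^ 2) + log (2 * π) ≤ 2 * A)
    (hhi : 2 * A ≤ x ^ 2 + log (x ^ 2) + log (2 * π) + 2 / x ^ 2) :
    |x - -√(2 * A - log (4 * π * A))| ≤
      6 * |-√(2 * A - log (4 * π * A)) * (log A / A ^ 2)| := by
  have hA0 : 0 < A := (exp_pos 1).trans_le he
  have hlogA : 1 ≤ log A := (le_log_iff_exp_le hA0).2 he
  have hx2 : 1 ≤ x ^ 2 := by nlinarith
  have hlog2A : log (2 * A) ≤ log (4 * π * A) :=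
    log_le_log (by positivity) (by nlinarith [pi_gt_three])
  have hAx2 : A ≤ x ^ 2 := by linarith [two_mul_sub_le_log_two_mul hx2 hlo hhi]
  set y := √(2 * A - log (4 * π * A))
  have hy2 : y ^ 2 = 2 * A - log (4 * π * A) := sq_sqrt (by linarith)
  have hAy2 : A ≤ y ^ 2 := by linarith
  have hy0 : 0 < y := sqrt_pos.2 (by linarith)
  have hnum : log (2 * A) + 4 ≤ 6 * log A := by
    rw [log_mul two_ne_zero hA0.ne']
    linarith [log_two_lt_d9]
  rw [sub_neg_eq_add, neg_mul, abs_neg,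
    abs_of_pos (mul_pos hy0 (div_pos (by linarith) (by positivity)))]
  calc |x + y| ≤ |x ^ 2 - y ^ 2| / y :=
        (le_div_iff₀ hy0).2 (abs_add_mul_le_abs_sq_sub_sq (by linarith) hy0.le)
    _ ≤ (log (2 * A) + 4) / x ^ 2 / y := by
        gcongr
        rw [hy2]
        exact abs_sub_two_mul_sub_log_le hx2 hlo hhi
    _ ≤ 6 * log A / A / y := by gcongr
    _ = 6 * (y * (log A / A ^ 2)) * (A / y ^ 2) := by field_simp
    _ ≤ 6 * (y * (log A / A ^ 2)) :=
        mul_le_of_le_one_right (by positivity) ((div_le_one (by positivity)).2 hAy2)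

theorem Monotone.tendsto_atBot_of_rightInverse {α : Type*} [LinearOrder α] {f : α → ℝ}
    {g : ℝ → α} (hf : Monotone f) (hpos : ∀ c, 0 < f c)
    (hfg : ∀ᶠ u in 𝓝[>] 0, f (g u) = u) :
    Tendsto g (𝓝[>] 0) atBot := by
  refine tendsto_atBot.2 fun c => ?_
  filter_upwards [hfg, Ioo_mem_nhdsGT (hpos c)] with u hu hlt
  exact (hf.reflect_lt (hu.trans_lt hlt.2)).le

lemma eventually_log_four_pi_mul_add_four_le : ∀ᶠ A in atTop, log (4 * π * A) + 4 ≤ A := by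
  filter_upwards [isLittleO_log_id_atTop.bound (by norm_num : (0:ℝ) < 1 / 2),
    eventually_gt_atTop 0, eventually_ge_atTop (2 * (log (4 * π) + 4))] with A hlog hA0 hA
  rw [norm_eq_abs, norm_eq_abs, id, abs_of_pos hA0] at hlog
  rw [log_mul (by positivity) hA0.ne']
  linarith [le_abs_self (log A)]

end NormalQuantile

open NormalQuantile in
/-- Accuracy of the closed-form approximation to the standard Normal lower
quantile. -/
theorem normal_quantile_approx
    (Φ PhiInv : ℝ → ℝ)
    (hΦ : ∀ x, Φ x = ∫ t in Set.Iic x, Real.exp (-t ^ 2 / 2) / Real.sqrt (2 * Real.pi))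
    (hinv : ∀ u ∈ Set.Ioo (0:ℝ) 1, Φ (PhiInv u) = u) :
    (fun u => PhiInv u -
        (-Real.sqrt (-2 * Real.log (u * Real.sqrt (4 * Real.pi * |Real.log u|)))))
      =O[𝓝[>] (0:ℝ)]
    (fun u => -Real.sqrt (-2 * Real.log (u * Real.sqrt (4 * Real.pi * |Real.log u|))) *
      (Real.log |Real.log u| / (Real.log u) ^ 2)) := by
  obtain rfl : Φ = stdNormalCDF := funext hΦ
  have hunit : ∀ᶠ u in 𝓝[>] (0:ℝ), u ∈ Ioo 0 1 := Ioo_mem_nhdsGT one_pos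
  have hPhiInv : Tendsto PhiInv (𝓝[>] 0) atBot :=
    monotone_stdNormalCDF.tendsto_atBot_of_rightInverse stdNormalCDF_pos (hunit.mono hinv)
  have hA : Tendsto (fun u => -log u) (𝓝[>] 0) atTop :=
    tendsto_neg_atBot_atTop.comp tendsto_log_nhdsGT_zero
  refine IsBigO.of_bound 6 ?_
  filter_upwards [hunit, hPhiInv.eventually_le_atBot (-1),
    hA.eventually eventually_log_four_pi_mul_add_four_le, hA.eventually_ge_atTop (exp 1)]
    with u hu hx1 hA4 he
  have hlog : log u < 0 := log_neg hu.1 hu.2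
  have hΦu : -2 * log (stdNormalCDF (PhiInv u)) = 2 * -log u := by rw [hinv u hu]; ring
  have harg : -2 * log (u * √(4 * π * |log u|)) = 2 * -log u - log (4 * π * -log u) := by
    have h4A : 0 < 4 * π * -log u := mul_pos (by positivity) (neg_pos.2 hlog)
    rw [abs_of_neg hlog, log_mul hu.1.ne' (sqrt_pos.2 h4A).ne', log_sqrt h4A.le]
    ring
  rw [norm_eq_abs, norm_eq_abs, harg, abs_of_neg hlog, ← neg_sq]
  exact abs_sub_neg_sqrt_le hx1 hA4 he
    ((le_neg_two_mul_log_stdNormalCDF (by linarith)).trans_eq hΦu)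
    (hΦu.symm.trans_le (neg_two_mul_log_stdNormalCDF_le (by linarith)))
end

section
/- Let Φ denote the standard Normal cdf. Then as u → 0⁺, Φ^{-1}(u) = -√(-2 log u) + (log|log u|)/(2√(-2 log u)) + (log 4π)/(2√(-2 log u)) + (log|log u|)²/(8(-2 log u)^{3/2}) + O(log|log u|/|log u|^{3/2}). -/
open Filter Topology Asymptotics Real MeasureTheory Set

/-!
With `s = -Φ⁻¹(u)` and `ℓ = -log u`, the Gaussian tail `∫ₛ^∞ e^{-t²/2} dt = √(2π) e^{-ℓ}` is
squeezed by Mills' bounds `(1 - s⁻²) e^{-s²/2} / s ≤ ∫ₛ^∞ e^{-t²/2} dt ≤ e^{-s²/2} / s` (each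
an exact antiderivative computation), so `y = 2ℓ` satisfies
`y = s² + 2 log s + log 2π + O(s⁻²)`. Inverting, `s² = y - B + O(log y / y)` with
`B = log y + log 2π = log ℓ + log 4π`, and the second-order expansion
`√(y - B) = √y - B / (2√y) - B² / (8 y^{3/2}) + O(B³ / y^{5/2})` gives the claim; replacing `B²`
by `(log ℓ)²` in the last term costs only `O(log ℓ / ℓ^{3/2})`.
-/

noncomputable def gaussTail (s : ℝ) : ℝ := ∫ t in Ioi s, exp (-t ^ 2 / 2)

lemma integrable_exp_neg_sq_div_two : Integrable fun t : ℝ => exp (-t ^ 2 / 2) := by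
  simpa [neg_div, div_eq_inv_mul] using integrable_exp_neg_mul_sq (b := 1 / 2) (by norm_num)

lemma hasDerivAt_exp_neg_sq_div_two (x : ℝ) :
    HasDerivAt (fun t => exp (-t ^ 2 / 2)) (-x * exp (-x ^ 2 / 2)) x :=
  ((hasDerivAt_pow 2 x).neg.div_const 2).exp.congr_deriv (by simp only [Pi.neg_apply]; ring)

lemma tendsto_exp_neg_sq_div_two_atTop : Tendsto (fun t : ℝ => exp (-t ^ 2 / 2)) atTop (𝓝 0) :=
  tendsto_exp_atBot.comp <|
    (tendsto_neg_atTop_atBot.comp (tendsto_pow_atTop two_ne_zero)).atBot_div_const two_pos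

lemma gaussTail_le {s : ℝ} (hs : 0 < s) : gaussTail s ≤ exp (-s ^ 2 / 2) / s := by
  have hderiv : ∀ x ∈ Ici s,
      HasDerivAt (fun t => -exp (-t ^ 2 / 2) / s) (x / s * exp (-x ^ 2 / 2)) x :=
    fun x _ => ((hasDerivAt_exp_neg_sq_div_two x).neg.div_const s).congr_deriv (by ring)
  have hnonneg : ∀ x ∈ Ioi s, 0 ≤ x / s * exp (-x ^ 2 / 2) := fun x hx => by
    have : 0 < x := hs.trans hx
    positivity
  have hlim : Tendsto (fun t => -exp (-t ^ 2 / 2) / s) atTop (𝓝 0) := by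
    simpa using tendsto_exp_neg_sq_div_two_atTop.neg.div_const s
  calc gaussTail s ≤ ∫ t in Ioi s, t / s * exp (-t ^ 2 / 2) := by
        refine setIntegral_mono_on integrable_exp_neg_sq_div_two.integrableOn
          (integrableOn_Ioi_deriv_of_nonneg' hderiv hnonneg hlim) measurableSet_Ioi fun t ht => ?_
        exact le_mul_of_one_le_left (exp_pos _).le ((one_le_div hs).mpr (le_of_lt ht))
    _ = exp (-s ^ 2 / 2) / s := by
        rw [integral_Ioi_of_hasDerivAt_of_nonneg' hderiv hnonneg hlim]; ring

lemma le_gaussTail {s : ℝ} (hs : 0 < s) (hs4 : 3 ≤ s ^ 4) :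
    (1 - 1 / s ^ 2) / s * exp (-s ^ 2 / 2) ≤ gaussTail s := by
  have hderiv : ∀ x ∈ Ici s, HasDerivAt (fun t => ((t ^ 3)⁻¹ - t⁻¹) * exp (-t ^ 2 / 2))
      ((1 - 3 / x ^ 4) * exp (-x ^ 2 / 2)) x := fun x hx => by
    have hx : x ≠ 0 := (hs.trans_le hx).ne'
    refine ((((hasDerivAt_pow 3 x).inv (pow_ne_zero 3 hx)).sub (hasDerivAt_inv hx)).mul
      (hasDerivAt_exp_neg_sq_div_two x)).congr_deriv ?_
    simp only [Pi.sub_apply, Pi.inv_apply]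
    field_simp
    ring
  have hnonneg : ∀ x ∈ Ioi s, 0 ≤ (1 - 3 / x ^ 4) * exp (-x ^ 2 / 2) := fun x hx => by
    have hx4 : s ^ 4 ≤ x ^ 4 := pow_le_pow_left₀ hs.le (le_of_lt hx) 4
    have : 3 / x ^ 4 ≤ 1 := (div_le_one (pow_pos (hs.trans hx) 4)).mpr (hs4.trans hx4)
    exact mul_nonneg (sub_nonneg.mpr this) (exp_pos _).le
  have hlim : Tendsto (fun t => ((t ^ 3)⁻¹ - t⁻¹) * exp (-t ^ 2 / 2)) atTop (𝓝 0) := by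
    simpa using (((tendsto_pow_atTop three_ne_zero).inv_tendsto_atTop).sub
      tendsto_inv_atTop_zero).mul tendsto_exp_neg_sq_div_two_atTop
  calc (1 - 1 / s ^ 2) / s * exp (-s ^ 2 / 2)
        = ∫ t in Ioi s, (1 - 3 / t ^ 4) * exp (-t ^ 2 / 2) := by
        rw [integral_Ioi_of_hasDerivAt_of_nonneg' hderiv hnonneg hlim]; ring
    _ ≤ gaussTail s := by
        refine setIntegral_mono_on (integrableOn_Ioi_deriv_of_nonneg' hderiv hnonneg hlim)
          integrable_exp_neg_sq_div_two.integrableOn measurableSet_Ioi fun t ht => ?_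
        have : 0 < t := hs.trans ht
        exact mul_le_of_le_one_left (exp_pos _).le (sub_le_self _ (by positivity))

lemma gaussTail_pos (s : ℝ) : 0 < gaussTail s := by
  rw [gaussTail, setIntegral_pos_iff_support_of_nonneg_ae
    (Eventually.of_forall fun _ => (exp_pos _).le) integrable_exp_neg_sq_div_two.integrableOn]
  simp [Function.support, (exp_pos _).ne']

lemma setIntegral_Iic_eq_gaussTail_neg (x : ℝ) :
    ∫ t in Iic x, exp (-t ^ 2 / 2) = gaussTail (-x) := by
  rw [gaussTail, ← neg_neg x, ← integral_comp_neg_Ioi, neg_neg]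
  simp

lemma gaussTail_antitone : Antitone gaussTail := fun _ _ hab =>
  setIntegral_mono_set integrable_exp_neg_sq_div_two.integrableOn
    (Eventually.of_forall fun _ => (exp_pos _).le) (Ioi_subset_Ioi hab).eventuallyLE

lemma neg_two_mul_le_log_one_sub {w : ℝ} (hw0 : 0 ≤ w) (hw : w ≤ 1 / 2) :
    -(2 * w) ≤ log (1 - w) := by
  have h1w : 0 < 1 - w := by linarith
  have hinv : (1 - w)⁻¹ ≤ 2 := by rw [inv_le_comm₀ h1w two_pos]; linarith
  have hid : 1 - (1 - w)⁻¹ = -(w * (1 - w)⁻¹) := by field_simp; ring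
  have := one_sub_inv_le_log_of_pos h1w
  nlinarith

lemma log_gaussTail_bounds {s : ℝ} (hs : 2 ≤ s) :
    s ^ 2 / 2 + log s ≤ -log (gaussTail s) ∧
      -log (gaussTail s) ≤ s ^ 2 / 2 + log s + 2 / s ^ 2 := by
  have hs0 : 0 < s := by linarith
  have hw : 1 / s ^ 2 ≤ 1 / 2 := by gcongr; nlinarith
  have hfac_pos : 0 < 1 - 1 / s ^ 2 := by linarith
  have hlow := le_gaussTail hs0 (by nlinarith [pow_le_pow_left₀ zero_le_two hs 4])
  constructor
  · have := log_le_log (gaussTail_pos s) (gaussTail_le hs0)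
    rw [log_div (exp_pos _).ne' hs0.ne', log_exp] at this
    linarith
  · have := log_le_log (by positivity) hlow
    rw [log_mul (by positivity) (exp_pos _).ne', log_div hfac_pos.ne' hs0.ne', log_exp] at this
    have := neg_two_mul_le_log_one_sub (by positivity) hw
    rw [mul_one_div] at this
    linarith

lemma abs_sqrt_sub_sqrt_le {a b d : ℝ} (ha : 0 ≤ a) (hb : 0 ≤ b) (hd : 0 < d)
    (h : d ≤ √a + √b) : |√a - √b| ≤ |a - b| / d := by
  have hprod : (√a - √b) * (√a + √b) = a - b := by
    linear_combination sq_sqrt ha - sq_sqrt hb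
  rw [le_div_iff₀ hd]
  calc |√a - √b| * d ≤ |√a - √b| * (√a + √b) := by gcongr
    _ = |a - b| := by rw [← abs_of_nonneg (hd.le.trans h), ← abs_mul, hprod]

lemma abs_sqrt_one_sub_sub_le {w : ℝ} (hw0 : 0 ≤ w) (hw : w ≤ 1 / 2) :
    |√(1 - w) - (1 - w / 2 - w ^ 2 / 8)| ≤ w ^ 3 / 2 := by
  have hP : 1 / 2 ≤ 1 - w / 2 - w ^ 2 / 8 := by nlinarith
  have h := abs_sqrt_sub_sqrt_le (a := 1 - w) (by linarith) (sq_nonneg (1 - w / 2 - w ^ 2 / 8))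
    one_half_pos (by rw [sqrt_sq (by linarith)]; linarith [sqrt_nonneg (1 - w)])
  rw [sqrt_sq (by linarith),
    show 1 - w - (1 - w / 2 - w ^ 2 / 8) ^ 2 = -(w ^ 3 / 8 + w ^ 4 / 64) by ring, abs_neg,
    abs_of_nonneg (by positivity : (0:ℝ) ≤ w ^ 3 / 8 + w ^ 4 / 64)] at h
  refine h.trans ?_
  nlinarith [pow_nonneg hw0 3]

lemma abs_sqrt_sq_sub_sub_le {q B : ℝ} (hq : 0 < q) (hB0 : 0 ≤ B) (hB : B ≤ q ^ 2 / 2) :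
    |√(q ^ 2 - B) - (q - B / (2 * q) - B ^ 2 / (8 * q ^ 3))| ≤ B ^ 3 / (2 * q ^ 5) := by
  have hw : B / q ^ 2 ≤ 1 / 2 := by rw [div_le_iff₀ (by positivity)]; linarith
  have hsqrt : √(q ^ 2 - B) = q * √(1 - B / q ^ 2) := by
    rw [show q ^ 2 - B = q ^ 2 * (1 - B / q ^ 2) by field_simp, sqrt_mul (sq_nonneg q),
      sqrt_sq hq.le]
  have hpoly : q - B / (2 * q) - B ^ 2 / (8 * q ^ 3)
      = q * (1 - B / q ^ 2 / 2 - (B / q ^ 2) ^ 2 / 8) := by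
    field_simp
  rw [hsqrt, hpoly, ← mul_sub, abs_mul, abs_of_pos hq]
  calc q * |√(1 - B / q ^ 2) - (1 - B / q ^ 2 / 2 - (B / q ^ 2) ^ 2 / 8)|
      ≤ q * ((B / q ^ 2) ^ 3 / 2) := by gcongr; exact abs_sqrt_one_sub_sub_le (by positivity) hw
    _ = B ^ 3 / (2 * q ^ 5) := by field_simp

lemma abs_sq_sub_sub_log_le {s y c : ℝ} (hs : 2 ≤ s) (hc : 0 ≤ c) (hc2 : c ≤ 2)
    (hlog : 1 ≤ log y) (hy : log y + 3 ≤ y / 2)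
    (h₁ : s ^ 2 + 2 * log s + c ≤ y) (h₂ : y ≤ s ^ 2 + 2 * log s + c + 4 / s ^ 2) :
    |s ^ 2 - (y - (log y + c))| ≤ 8 * log y / y := by
  have hs0 : 0 < s := by linarith
  have hy0 : 0 < y := by linarith
  have hlogs : 0 ≤ log s := log_nonneg (by linarith)
  have hsy : s ^ 2 ≤ y := by linarith
  have hlogsy : 2 * log s ≤ log y := by
    simpa [log_pow] using log_le_log (by positivity) hsy
  have h4s : 4 / s ^ 2 ≤ 1 := by rw [div_le_one (by positivity)]; nlinarith
  have hgap : y - s ^ 2 ≤ log y + 3 := by linarith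
  have hys : y / 2 ≤ s ^ 2 := by linarith
  have hsplit : s ^ 2 - (y - (log y + c))
      = log (y / s ^ 2) - (y - (s ^ 2 + 2 * log s + c)) := by
    rw [log_div hy0.ne' (by positivity), log_pow]
    push_cast
    ring
  have hlog_nonneg : 0 ≤ log (y / s ^ 2) := log_nonneg ((one_le_div (by positivity)).mpr hsy)
  have hlog_le : log (y / s ^ 2) ≤ 8 * log y / y :=
    calc log (y / s ^ 2) ≤ y / s ^ 2 - 1 := log_le_sub_one_of_pos (by positivity)
      _ = (y - s ^ 2) / s ^ 2 := by field_simp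
      _ ≤ (log y + 3) / (y / 2) := by gcongr
      _ ≤ 8 * log y / y := by rw [div_le_div_iff₀ (by positivity) hy0]; nlinarith
  have h4s_le : 4 / s ^ 2 ≤ 8 * log y / y :=
    calc 4 / s ^ 2 ≤ 4 / (y / 2) := by gcongr
      _ = 8 / y := by field_simp; norm_num
      _ ≤ 8 * log y / y := by gcongr; linarith
  rw [hsplit, abs_le]
  constructor <;> linarith

lemma abs_sub_sqrt_expansion_le {s y c : ℝ} (hs : 2 ≤ s) (hc : 0 ≤ c) (hc2 : c ≤ 2)
    (hy : 36 ≤ y) (h₁ : s ^ 2 + 2 * log s + c ≤ y) (h₂ : y ≤ s ^ 2 + 2 * log s + c + 4 / s ^ 2) :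
    |s - (√y - (log y + c) / (2 * √y) - (log y + c) ^ 2 / (8 * √y ^ 3))|
      ≤ 70 * log y / √y ^ 3 := by
  obtain ⟨q, hq, rfl⟩ : ∃ q, 6 ≤ q ∧ q ^ 2 = y :=
    ⟨√y, by rw [le_sqrt' (by norm_num)]; linarith, sq_sqrt (by linarith)⟩
  rw [sqrt_sq (by linarith)]
  have hq0 : 0 < q := by linarith
  have hlog1 : 1 ≤ log (q ^ 2) := by
    rw [le_log_iff_exp_le (by positivity)]
    linarith [exp_one_lt_d9]
  have hlogq : log (q ^ 2) ≤ 2 * q := by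
    rw [log_pow]; push_cast; linarith [log_le_sub_one_of_pos hq0]
  set L := log (q ^ 2)
  set B := L + c
  have hB : B ≤ q ^ 2 / 2 := by nlinarith
  have hρ := abs_sq_sub_sub_log_le hs hc hc2 hlog1 (by nlinarith) h₁ h₂
  have hroot : |s - √(q ^ 2 - B)| ≤ 16 * L / q ^ 3 := by
    have hhalf : q / 2 ≤ √(q ^ 2 - B) := by
      rw [le_sqrt' (by positivity)]; linarith
    have h := abs_sqrt_sub_sqrt_le (sq_nonneg s) (by linarith : 0 ≤ q ^ 2 - B)
      (by positivity : 0 < q / 2) (by rw [sqrt_sq (by linarith)]; linarith)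
    rw [sqrt_sq (by linarith)] at h
    calc |s - √(q ^ 2 - B)| ≤ (8 * L / q ^ 2) / (q / 2) := h.trans (by gcongr)
      _ = 16 * L / q ^ 3 := by field_simp; ring
  have hcube : B ^ 3 / (2 * q ^ 5) ≤ 54 * L / q ^ 3 := by
    have hB3 : B ≤ 3 * L := by linarith
    have hL2 : L ^ 2 ≤ 4 * q ^ 2 := by nlinarith
    have hB3' : B ^ 3 ≤ 27 * L ^ 3 := by nlinarith [pow_le_pow_left₀ (by linarith) hB3 3]
    rw [div_le_div_iff₀ (by positivity) (by positivity)]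
    calc B ^ 3 * q ^ 3 ≤ 27 * L * L ^ 2 * q ^ 3 := by nlinarith [pow_pos hq0 3]
      _ ≤ 27 * L * (4 * q ^ 2) * q ^ 3 := by gcongr
      _ = 54 * L * (2 * q ^ 5) := by ring
  calc _ ≤ |s - √(q ^ 2 - B)| + |√(q ^ 2 - B) - (q - B / (2 * q) - B ^ 2 / (8 * q ^ 3))| :=
        abs_sub_le _ _ _
    _ ≤ 16 * L / q ^ 3 + 54 * L / q ^ 3 :=
        add_le_add hroot ((abs_sqrt_sq_sub_sub_le hq0 (by linarith) hB).trans hcube)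
    _ = 70 * L / q ^ 3 := by ring

lemma log_two_mul_pi_le_two : log (2 * π) ≤ 2 := by
  rw [log_le_iff_le_exp (by positivity), show (2:ℝ) = 1 + 1 by norm_num, exp_add]
  nlinarith [pi_lt_d2, exp_one_gt_d9]

lemma bounds_of_gaussTail_eq {s ℓ : ℝ} (hs : 2 ≤ s)
    (htail : gaussTail s = √(2 * π) * exp (-ℓ)) :
    s ^ 2 + 2 * log s + log (2 * π) ≤ 2 * ℓ ∧
      2 * ℓ ≤ s ^ 2 + 2 * log s + log (2 * π) + 4 / s ^ 2 := by
  have hlog : -log (gaussTail s) = ℓ - log (2 * π) / 2 := by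
    rw [htail, log_mul (by positivity) (exp_pos _).ne', log_sqrt (by positivity), log_exp]
    ring
  obtain ⟨h₁, h₂⟩ := log_gaussTail_bounds hs
  constructor
  · linarith
  · linarith [show 4 / s ^ 2 = 2 * (2 / s ^ 2) by ring]

lemma abs_neg_sub_expansion_le_of_gaussTail_eq {s ℓ : ℝ} (hs : 2 ≤ s) (hℓ : 18 ≤ ℓ)
    (htail : gaussTail s = √(2 * π) * exp (-ℓ)) :
    |-s - (-√(2 * ℓ) + log ℓ / (2 * √(2 * ℓ)) + log (4 * π) / (2 * √(2 * ℓ))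
        + log ℓ ^ 2 / (8 * √(2 * ℓ) ^ 3))| ≤ 144 * (log ℓ / √ℓ ^ 3) := by
  have hℓ0 : 0 < ℓ := by linarith
  have h2π : 0 ≤ log (2 * π) := log_nonneg (by nlinarith [pi_gt_three])
  obtain ⟨h₁, h₂⟩ := bounds_of_gaussTail_eq hs htail
  have hcore := abs_sub_sqrt_expansion_le hs h2π log_two_mul_pi_le_two
    (by linarith : 36 ≤ 2 * ℓ) h₁ h₂
  have hK : log (4 * π) = log 2 + log (2 * π) := by
    rw [show (4:ℝ) * π = 2 * (2 * π) by ring, log_mul two_ne_zero (by positivity)]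
  rw [log_mul two_ne_zero hℓ0.ne',
    show log 2 + log ℓ + log (2 * π) = log ℓ + log (4 * π) by rw [hK]; ring] at hcore
  have hL : 1 ≤ log ℓ := by
    rw [le_log_iff_exp_le hℓ0]
    linarith [exp_one_lt_d9]
  have hlog2 : log 2 ≤ 1 := by linarith [log_two_lt_d9]
  have hK0 : 0 ≤ log (4 * π) := by linarith [log_nonneg one_le_two]
  have hK3 : log (4 * π) ≤ 3 := by linarith [log_two_mul_pi_le_two]
  set L := log ℓ
  set K := log (4 * π)
  set Q := √(2 * ℓ)
  have hQ0 : 0 < √ℓ := sqrt_pos.mpr hℓ0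
  have hQ : √ℓ ≤ Q := sqrt_le_sqrt (by linarith)
  have hsplit : -s - (-Q + L / (2 * Q) + K / (2 * Q) + L ^ 2 / (8 * Q ^ 3))
      = -(s - (Q - (L + K) / (2 * Q) - (L + K) ^ 2 / (8 * Q ^ 3)))
        + K * (2 * L + K) / (8 * Q ^ 3) := by
    have : Q ≠ 0 := (hQ0.trans_le hQ).ne'
    field_simp
    ring
  have hswap : K * (2 * L + K) / (8 * Q ^ 3) ≤ 2 * L / Q ^ 3 := by
    have : K * (2 * L + K) ≤ 16 * L := by
      nlinarith [mul_le_mul_of_nonneg_right hK3 (by linarith : 0 ≤ 2 * L + K)]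
    rw [div_le_div_iff₀ (by positivity) (by positivity)]
    nlinarith [pow_pos (hQ0.trans_le hQ) 3]
  rw [hsplit]
  calc _ ≤ |s - (Q - (L + K) / (2 * Q) - (L + K) ^ 2 / (8 * Q ^ 3))|
        + |K * (2 * L + K) / (8 * Q ^ 3)| := by rw [← abs_neg (s - _)]; exact abs_add_le _ _
    _ ≤ 70 * (log 2 + L) / Q ^ 3 + 2 * L / Q ^ 3 := by
        rw [abs_of_nonneg (div_nonneg (mul_nonneg hK0 (by linarith)) (by positivity))]
        exact add_le_add hcore hswap
    _ = (70 * (log 2 + L) + 2 * L) / Q ^ 3 := by ring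
    _ ≤ 144 * L / Q ^ 3 := by gcongr; linarith
    _ ≤ 144 * (L / √ℓ ^ 3) := by rw [← mul_div_assoc]; gcongr

/-- Asymptotic expansion of the standard Normal lower quantile. -/
theorem normal_quantile_expansion
    (Φ PhiInv : ℝ → ℝ)
    (hΦ : ∀ x, Φ x = ∫ t in Set.Iic x, Real.exp (-t ^ 2 / 2) / Real.sqrt (2 * Real.pi))
    (hinv : ∀ u ∈ Set.Ioo (0:ℝ) 1, Φ (PhiInv u) = u) :
    (fun u => PhiInv u -
      (-Real.sqrt (-2 * Real.log u)
        + Real.log |Real.log u| / (2 * Real.sqrt (-2 * Real.log u))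
        + Real.log (4 * Real.pi) / (2 * Real.sqrt (-2 * Real.log u))
        + (Real.log |Real.log u|) ^ 2 / (8 * (-2 * Real.log u) ^ ((3:ℝ) / 2))))
      =O[𝓝[>] (0:ℝ)]
    (fun u => Real.log |Real.log u| / |Real.log u| ^ ((3:ℝ) / 2)) := by
  have hΦ' : ∀ x, Φ x = gaussTail (-x) / √(2 * π) := fun x => by
    rw [hΦ, integral_div, setIntegral_Iic_eq_gaussTail_neg]
  have hsmall : Ioo 0 (min (Φ (-2)) (exp (-18))) ∈ 𝓝[>] (0:ℝ) :=
    Ioo_mem_nhdsGT (lt_min (by rw [hΦ']; exact div_pos (gaussTail_pos _) (by positivity))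
      (exp_pos _))
  refine IsBigO.of_bound 144 ?_
  filter_upwards [hsmall] with u ⟨hu0, hu_lt⟩
  obtain ⟨huΦ, hu18⟩ := lt_min_iff.mp hu_lt
  have hu : Φ (PhiInv u) = u := hinv u ⟨hu0, hu18.trans (exp_lt_one_iff.mpr (by norm_num))⟩
  have hs : 2 ≤ -PhiInv u := by
    by_contra! h
    have : Φ (-2) ≤ Φ (PhiInv u) := by
      rw [hΦ', hΦ', neg_neg]
      exact div_le_div_of_nonneg_right (gaussTail_antitone h.le) (sqrt_nonneg _)
    linarith
  obtain ⟨ℓ, rfl⟩ : ∃ ℓ, u = exp (-ℓ) := ⟨-log u, by rw [neg_neg, exp_log hu0]⟩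
  have hℓ : 18 ≤ ℓ := by simpa using hu18.le
  have htail : gaussTail (-PhiInv (exp (-ℓ))) = √(2 * π) * exp (-ℓ) := by
    rw [hΦ', div_eq_iff (by positivity)] at hu
    rw [hu, mul_comm]
  have key := abs_neg_sub_expansion_le_of_gaussTail_eq hs hℓ htail
  have hℓ0 : 0 ≤ ℓ := by linarith
  simp only [log_exp, abs_neg, abs_of_nonneg hℓ0, neg_mul_neg, neg_neg, norm_eq_abs, rpow_ofNat,
    rpow_div_two_eq_sqrt _ hℓ0, rpow_div_two_eq_sqrt _ (by positivity : (0:ℝ) ≤ 2 * ℓ)] at key ⊢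
  rwa [abs_of_nonneg (div_nonneg (log_nonneg (by linarith)) (by positivity))]
end

section
/- Let λ(u) = 2Φ(Φ^{-1}(u)√((1-ρ)/(1+ρ))) for fixed ρ ∈ (-1, 1), where Φ is the standard Normal cdf. Then λ(u) ~ u^{(1-ρ)/(1+ρ)} L(u) as u → 0⁺, where L(u) = 2√((1+ρ)/(1-ρ)) (-4π log u)^{-ρ/(1+ρ)}. -/
/-!
Put `x = -Φ⁻¹(u)`, so `x → ∞` as `u → 0⁺`. Mills' inequalities
`x φ(x) / (1 + x²) ≤ Φ(-x) ≤ φ(x) / x` give `Φ(-x) = m(x) φ(x) / x` with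
`m(x) = x Φ(-x) / φ(x) → 1`, hence `-2 log u ~ x²`. With `α = (1 - ρ)/(1 + ρ)` the Gaussian
factors `exp(-α x²/2)` cancel and
`λ(u) / (u^α L(u)) = exp (log m(√α x) - α log m(x) + (α - 1)/2 · log (x² / (-2 log u)))`,
whose exponent tends to `0`.
-/

open Filter Topology Asymptotics Real MeasureTheory Set

noncomputable def stdNormalPDF (x : ℝ) : ℝ := exp (-x ^ 2 / 2) / √(2 * π)

noncomputable def stdNormalCDF (x : ℝ) : ℝ := ∫ t in Iic x, stdNormalPDF t

noncomputable def millsRatio (x : ℝ) : ℝ := stdNormalCDF (-x) / stdNormalPDF x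

lemma stdNormalPDF_pos (x : ℝ) : 0 < stdNormalPDF x := by
  unfold stdNormalPDF; positivity

lemma stdNormalPDF_neg (x : ℝ) : stdNormalPDF (-x) = stdNormalPDF x := by
  simp [stdNormalPDF]

lemma integrable_stdNormalPDF : Integrable stdNormalPDF := by
  have := (integrable_exp_neg_mul_sq (b := 1 / 2) (by norm_num)).div_const √(2 * π)
  convert this using 1
  ext x; unfold stdNormalPDF; ring_nf

lemma hasDerivAt_stdNormalPDF (x : ℝ) : HasDerivAt stdNormalPDF (-x * stdNormalPDF x) x := by
  have h : HasDerivAt (fun x : ℝ => -x ^ 2 / 2) (-x) x := by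
    simpa [neg_div] using (hasDerivAt_pow 2 x).fun_neg.div_const 2
  exact (h.exp.div_const √(2 * π)).congr_deriv (by unfold stdNormalPDF; ring)

lemma tendsto_stdNormalPDF_atTop : Tendsto stdNormalPDF atTop (𝓝 0) := by
  unfold stdNormalPDF
  have h : Tendsto (fun x : ℝ => -x ^ 2 / 2) atTop atBot := by
    have := tendsto_neg_atTop_atBot.comp
      ((tendsto_pow_atTop (α := ℝ) two_ne_zero).atTop_div_const (two_pos (α := ℝ)))
    exact this.congr fun x => by simp [neg_div]
  simpa using (tendsto_exp_atBot.comp h).div_const √(2 * π)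

lemma stdNormalCDF_neg_eq_integral_Ioi (x : ℝ) :
    stdNormalCDF (-x) = ∫ t in Ioi x, stdNormalPDF t := by
  rw [stdNormalCDF, ← integral_comp_neg_Ioi]
  simp [stdNormalPDF_neg]

lemma stdNormalCDF_mono : Monotone stdNormalCDF := fun _ _ hab =>
  setIntegral_mono_set integrable_stdNormalPDF.integrableOn
    (Eventually.of_forall fun t => (stdNormalPDF_pos t).le) (Iic_subset_Iic.2 hab).eventuallyLE

lemma stdNormalCDF_neg_le {x : ℝ} (hx : 0 < x) : stdNormalCDF (-x) ≤ stdNormalPDF x / x := by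
  have hderiv :
      ∀ t ∈ Ici x, HasDerivAt (fun t => -stdNormalPDF t / x) (t * stdNormalPDF t / x) t :=
    fun t _ => ((hasDerivAt_stdNormalPDF t).neg.div_const x).congr_deriv (by ring)
  have hnonneg : ∀ t ∈ Ioi x, 0 ≤ t * stdNormalPDF t / x := fun t ht =>
    div_nonneg (mul_nonneg (hx.trans ht).le (stdNormalPDF_pos t).le) hx.le
  have hlim : Tendsto (fun t => -stdNormalPDF t / x) atTop (𝓝 0) := by
    simpa using tendsto_stdNormalPDF_atTop.neg.div_const x
  calc stdNormalCDF (-x) = ∫ t in Ioi x, stdNormalPDF t := stdNormalCDF_neg_eq_integral_Ioi x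
    _ ≤ ∫ t in Ioi x, t * stdNormalPDF t / x := by
      refine setIntegral_mono_on integrable_stdNormalPDF.integrableOn
        (integrableOn_Ioi_deriv_of_nonneg' hderiv hnonneg hlim) measurableSet_Ioi fun t ht => ?_
      rw [le_div_iff₀ hx, mul_comm]
      exact mul_le_mul_of_nonneg_right (le_of_lt ht) (stdNormalPDF_pos t).le
    _ = stdNormalPDF x / x := by
      rw [integral_Ioi_of_hasDerivAt_of_nonneg' hderiv hnonneg hlim]; ring

lemma stdNormalPDF_div_le {x : ℝ} (hx : 0 < x) :
    stdNormalPDF x / x ≤ (1 + (x ^ 2)⁻¹) * stdNormalCDF (-x) := by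
  have hderiv : ∀ t ∈ Ici x, HasDerivAt (fun t => -stdNormalPDF t / t)
      ((1 + (t ^ 2)⁻¹) * stdNormalPDF t) t := fun t ht => by
    have ht : t ≠ 0 := (hx.trans_le ht).ne'
    refine ((hasDerivAt_stdNormalPDF t).fun_neg.div (hasDerivAt_id' t) ht).congr_deriv ?_
    field_simp; ring
  have hnonneg : ∀ t ∈ Ioi x, 0 ≤ (1 + (t ^ 2)⁻¹) * stdNormalPDF t := fun t _ =>
    mul_nonneg (by positivity) (stdNormalPDF_pos t).le
  have hlim : Tendsto (fun t => -stdNormalPDF t / t) atTop (𝓝 0) := by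
    simpa using tendsto_stdNormalPDF_atTop.neg.div_atTop tendsto_id
  calc stdNormalPDF x / x = ∫ t in Ioi x, (1 + (t ^ 2)⁻¹) * stdNormalPDF t := by
        rw [integral_Ioi_of_hasDerivAt_of_nonneg' hderiv hnonneg hlim]; ring
    _ ≤ ∫ t in Ioi x, (1 + (x ^ 2)⁻¹) * stdNormalPDF t := by
      refine setIntegral_mono_on (integrableOn_Ioi_deriv_of_nonneg' hderiv hnonneg hlim)
        (integrable_stdNormalPDF.const_mul _).integrableOn measurableSet_Ioi fun t ht => ?_
      gcongr
      exacts [(stdNormalPDF_pos t).le, le_of_lt ht]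
    _ = (1 + (x ^ 2)⁻¹) * stdNormalCDF (-x) := by
      rw [integral_const_mul, stdNormalCDF_neg_eq_integral_Ioi]

lemma mul_millsRatio_le_one {x : ℝ} (hx : 0 < x) : x * millsRatio x ≤ 1 := by
  rw [millsRatio, mul_div_assoc', div_le_one (stdNormalPDF_pos x), mul_comm, ← le_div_iff₀ hx]
  exact stdNormalCDF_neg_le hx

lemma inv_one_add_inv_sq_le_mul_millsRatio {x : ℝ} (hx : 0 < x) :
    (1 + (x ^ 2)⁻¹)⁻¹ ≤ x * millsRatio x := by
  rw [millsRatio, mul_div_assoc', le_div_iff₀ (stdNormalPDF_pos x),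
    inv_mul_le_iff₀ (by positivity), mul_left_comm, ← div_le_iff₀' hx]
  exact stdNormalPDF_div_le hx

lemma tendsto_mul_millsRatio_atTop : Tendsto (fun x => x * millsRatio x) atTop (𝓝 1) := by
  have hlower : Tendsto (fun x : ℝ => (1 + (x ^ 2)⁻¹)⁻¹) atTop (𝓝 1) := by
    simpa using ((tendsto_inv_atTop_zero.comp
      (tendsto_pow_atTop (α := ℝ) two_ne_zero)).const_add 1).inv₀ (by norm_num)
  refine tendsto_of_tendsto_of_tendsto_of_le_of_le' hlower tendsto_const_nhds ?_ ?_
  · filter_upwards [eventually_gt_atTop 0] with x hx using inv_one_add_inv_sq_le_mul_millsRatio hx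
  · filter_upwards [eventually_gt_atTop 0] with x hx using mul_millsRatio_le_one hx

lemma stdNormalCDF_neg_pos {x : ℝ} (hx : 0 < x) : 0 < stdNormalCDF (-x) :=
  pos_of_mul_pos_right ((div_pos (stdNormalPDF_pos x) hx).trans_le (stdNormalPDF_div_le hx))
    (by positivity)

lemma log_stdNormalCDF_neg {x : ℝ} (hx : 0 < x) :
    log (stdNormalCDF (-x)) = log (x * millsRatio x) - x ^ 2 / 2 - log x - log √(2 * π) := by
  have hm : 0 < x * millsRatio x :=
    mul_pos hx (div_pos (stdNormalCDF_neg_pos hx) (stdNormalPDF_pos x))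
  have hS : 0 < √(2 * π) := by positivity
  have h : stdNormalCDF (-x) = x * millsRatio x * exp (-x ^ 2 / 2) / x / √(2 * π) := by
    rw [millsRatio, stdNormalPDF]; field_simp
  rw [h, log_div (by positivity) hS.ne', log_div (by positivity) hx.ne',
    log_mul hm.ne' (exp_pos _).ne', log_exp]
  ring

lemma tendsto_log_mul_millsRatio_atTop :
    Tendsto (fun x => log (x * millsRatio x)) atTop (𝓝 0) := by
  simpa using tendsto_mul_millsRatio_atTop.log one_ne_zero

lemma neg_two_mul_log_stdNormalCDF_neg_isEquivalent :
    (fun x => -2 * log (stdNormalCDF (-x))) ~[atTop] fun x => x ^ 2 := by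
  have hlog : log =o[atTop] fun x : ℝ => x ^ 2 := by
    simpa using isLittleO_log_rpow_atTop two_pos
  have hone : (fun _ => (1 : ℝ)) =o[atTop] fun x : ℝ => x ^ 2 :=
    (isLittleO_one_left_iff ℝ).2 (tendsto_norm_atTop_atTop.comp (tendsto_pow_atTop two_ne_zero))
  have hbdd :
      (fun x => 2 * log √(2 * π) - 2 * log (x * millsRatio x)) =O[atTop] fun _ => (1 : ℝ) :=
    (tendsto_log_mul_millsRatio_atTop.const_mul 2).const_sub _ |>.isBigO_one ℝ
  refine (IsEquivalent.refl.add_isLittleO ((hlog.const_mul_left 2).add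
    (hbdd.trans_isLittleO hone))).congr_left ?_
  filter_upwards [eventually_gt_atTop 0] with x hx
  simp only [Pi.add_apply, log_stdNormalCDF_neg hx]
  ring

lemma eventually_log_stdNormalCDF_neg_lt_zero :
    ∀ᶠ x in atTop, log (stdNormalCDF (-x)) < 0 := by
  have hpos : ∀ᶠ x : ℝ in atTop, 0 < x ^ 2 := by
    filter_upwards [eventually_gt_atTop 0] with x hx using by positivity
  filter_upwards [neg_two_mul_log_stdNormalCDF_neg_isEquivalent.eventually_pos hpos] with x hx
  linarith

lemma tendsto_sq_div_neg_two_mul_log_stdNormalCDF_neg :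
    Tendsto (fun x => x ^ 2 / (-2 * log (stdNormalCDF (-x)))) atTop (𝓝 1) := by
  refine (isEquivalent_iff_tendsto_one ?_).1 neg_two_mul_log_stdNormalCDF_neg_isEquivalent.symm
  filter_upwards [eventually_log_stdNormalCDF_neg_lt_zero] with x hx
  linarith

lemma stdNormalCDF_neg_sqrt_mul_div_eq_exp {α x : ℝ} (hα : 0 < α) (hx : 0 < x)
    (hlog : log (stdNormalCDF (-x)) < 0) :
    stdNormalCDF (-(√α * x)) /
        (stdNormalCDF (-x) ^ α * ((√α)⁻¹ * (-4 * π * log (stdNormalCDF (-x))) ^ ((α - 1) / 2))) =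
      exp (log (√α * x * millsRatio (√α * x)) - α * log (x * millsRatio x) +
        (α - 1) / 2 * log (x ^ 2 / (-2 * log (stdNormalCDF (-x))))) := by
  have hc : 0 < √α := sqrt_pos.2 hα
  have hcx : 0 < √α * x := mul_pos hc hx
  have hp := stdNormalCDF_neg_pos hx
  have hL : 0 < -2 * log (stdNormalCDF (-x)) := by linarith
  have hnum := stdNormalCDF_neg_pos hcx
  have hL' : 0 < -4 * π * log (stdNormalCDF (-x)) := by nlinarith [pi_pos]
  have hden : 0 < stdNormalCDF (-x) ^ α *
      ((√α)⁻¹ * (-4 * π * log (stdNormalCDF (-x))) ^ ((α - 1) / 2)) := by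
    positivity
  have hlogden : log (stdNormalCDF (-x) ^ α *
      ((√α)⁻¹ * (-4 * π * log (stdNormalCDF (-x))) ^ ((α - 1) / 2))) =
      α * log (stdNormalCDF (-x)) - log √α +
        (α - 1) / 2 * (log (2 * π) + log (-2 * log (stdNormalCDF (-x)))) := by
    rw [log_mul (by positivity) (by positivity), log_rpow hp,
      log_mul (by positivity) (by positivity), log_inv, log_rpow hL',
      show -4 * π * log (stdNormalCDF (-x)) = 2 * π * (-2 * log (stdNormalCDF (-x))) by ring,
      log_mul (by positivity) hL.ne']
    ring
  have hlogsq : log (x ^ 2 / (-2 * log (stdNormalCDF (-x)))) =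
      2 * log x - log (-2 * log (stdNormalCDF (-x))) := by
    rw [log_div (by positivity) hL.ne', log_pow]; push_cast; ring
  rw [← exp_log (div_pos hnum hden), log_div hnum.ne' hden.ne', hlogden, hlogsq,
    log_stdNormalCDF_neg hcx, log_stdNormalCDF_neg hx, log_mul hc.ne' hx.ne', mul_pow,
    sq_sqrt hα.le, log_sqrt (show 0 ≤ 2 * π by positivity)]
  congr 1
  ring

theorem tendsto_stdNormalCDF_neg_sqrt_mul_div {α : ℝ} (hα : 0 < α) :
    Tendsto (fun x => stdNormalCDF (-(√α * x)) /
      (stdNormalCDF (-x) ^ α * ((√α)⁻¹ * (-4 * π * log (stdNormalCDF (-x))) ^ ((α - 1) / 2))))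
      atTop (𝓝 1) := by
  have hm := tendsto_log_mul_millsRatio_atTop
  have hexponent := ((hm.comp (tendsto_id.const_mul_atTop (sqrt_pos.2 hα))).sub
    (hm.const_mul α)).add
      ((tendsto_sq_div_neg_two_mul_log_stdNormalCDF_neg.log one_ne_zero).const_mul ((α - 1) / 2))
  simp only [log_one, mul_zero, sub_zero, add_zero] at hexponent
  refine (exp_zero ▸ hexponent.rexp).congr' ?_
  filter_upwards [eventually_gt_atTop 0, eventually_log_stdNormalCDF_neg_lt_zero]
    with x hx hlog
  exact (stdNormalCDF_neg_sqrt_mul_div_eq_exp hα hx hlog).symm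

lemma tendsto_nhdsGT_atBot_of_monotone {α β : Type*} [LinearOrder α] [Nonempty α]
    [LinearOrder β] [TopologicalSpace β] [OrderTopology β] {f : α → β} {g : β → α} {a : β}
    (hf : Monotone f) (hgt : ∀ᶠ x in atBot, a < f x) (hfg : ∀ᶠ u in 𝓝[>] a, f (g u) = u) :
    Tendsto g (𝓝[>] a) atBot := by
  refine tendsto_atBot.2 fun M => ?_
  obtain ⟨M', hM'gt, hM'le⟩ := (hgt.and (eventually_le_atBot M)).exists
  filter_upwards [hfg, Ioo_mem_nhdsGT hM'gt] with u hu hu'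
  exact (hf.reflect_lt (hu.trans_lt hu'.2)).le.trans hM'le

lemma eventually_stdNormalCDF_pos_atBot : ∀ᶠ x in atBot, 0 < stdNormalCDF x := by
  filter_upwards [eventually_lt_atBot 0] with x hx
  simpa using stdNormalCDF_neg_pos (neg_pos.2 hx)

/-- λ(u) = 2Φ(Φ⁻¹(u)√((1-ρ)/(1+ρ))) is regularly varying at 0 with index
(1-ρ)/(1+ρ) and explicit slowly varying part. -/
theorem lambda_regular_variation
    (Φ PhiInv : ℝ → ℝ) (ρ : ℝ) (hρ : ρ ∈ Set.Ioo (-1 : ℝ) 1)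
    (hΦ : ∀ x, Φ x = ∫ t in Set.Iic x, Real.exp (-t ^ 2 / 2) / Real.sqrt (2 * Real.pi))
    (hinv : ∀ u ∈ Set.Ioo (0:ℝ) 1, Φ (PhiInv u) = u) :
    Tendsto (fun u =>
        (2 * Φ (PhiInv u * Real.sqrt ((1 - ρ) / (1 + ρ)))) /
        (u ^ ((1 - ρ) / (1 + ρ)) *
          (2 * Real.sqrt ((1 + ρ) / (1 - ρ)) *
            (-4 * Real.pi * Real.log u) ^ (-ρ / (1 + ρ)))))
      (𝓝[>] (0:ℝ)) (𝓝 1) := by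
  obtain ⟨hρ₁, hρ₂⟩ := hρ
  obtain rfl : Φ = stdNormalCDF := funext hΦ
  have hα : 0 < (1 - ρ) / (1 + ρ) := div_pos (by linarith) (by linarith)
  have hE : -ρ / (1 + ρ) = ((1 - ρ) / (1 + ρ) - 1) / 2 := by
    rw [div_sub_one (by linarith)]
    ring
  have hsqrt : √((1 + ρ) / (1 - ρ)) = (√((1 - ρ) / (1 + ρ)))⁻¹ := by rw [← sqrt_inv, inv_div]
  have hinv' : ∀ᶠ u in 𝓝[>] (0 : ℝ), stdNormalCDF (PhiInv u) = u := by
    filter_upwards [Ioo_mem_nhdsGT one_pos] using hinv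
  have hX : Tendsto (fun u => -PhiInv u) (𝓝[>] 0) atTop := tendsto_neg_atBot_atTop.comp <|
    tendsto_nhdsGT_atBot_of_monotone stdNormalCDF_mono eventually_stdNormalCDF_pos_atBot hinv'
  refine ((tendsto_stdNormalCDF_neg_sqrt_mul_div hα).comp hX).congr' ?_
  filter_upwards [hinv'] with u hu
  simp only [Function.comp_apply, neg_neg, hu, hE, hsqrt, mul_neg, mul_comm _ (PhiInv u)]
  rw [mul_assoc 2, mul_left_comm _ 2, mul_div_mul_left _ _ two_ne_zero]
end

section
/- Let X ~ Γ(α, β) with density f(x) = (β^α/Γ(α)) x^{α-1} e^{-βx} for x > 0, with α ≠ 1. Then the cdf g satisfies g(x) = 1 - (β^{α-1}/Γ(α)) x^{α-1} e^{-βx}(1 + O(1/x)) as x → ∞, and the quantile function h = g^{-1} satisfies, as u → 1⁻: h(u) = -(1/β) log(1-u) + ((α-1)/β) log|log(1-u)| - (1/β) log Γ(α) + O(log|log(1-u)|/|log(1-u)|). -/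
/-!
Integration by parts gives
`∫ₓ^∞ t^p e^{-βt} dt = x^p e^{-βx}/β + (p/β) ∫ₓ^∞ t^{p-1} e^{-βt} dt`,
and the last integral is `O(x^{p-1} e^{-βx})` because `t^p e^{-βt/2}` decreases once
`t ≥ 2|p|/β`; with `p = α - 1` this is the tail estimate. Taking logarithms,
`L := -log (1 - g x)` satisfies `L = βx - (α-1) log x - log A + O(1/x)` with
`A = β^{α-1}/Γ(α)`. Hence `L ~ βx`, so `log x = log L - log β + O(log L / L)`, and substituting
this back solves for `x`. Finally `h u → ∞` as `u → 1⁻` and `1 - u = 1 - g (h u)`, so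
`L = -log (1 - u)` along `x = h u`.
-/

open Filter Topology Asymptotics Real MeasureTheory Set

theorem Filter.Tendsto.isBigO_log_sub_one {α : Type*} {l : Filter α} {f : α → ℝ}
    (hf : Tendsto f l (𝓝 1)) : (fun x => Real.log (f x)) =O[l] fun x => f x - 1 := by
  simpa [Function.comp_def] using (hasDerivAt_log one_ne_zero).isBigO_sub.comp_tendsto hf

section Ratio

variable {α : Type*} {l : Filter α} {f g v : α → ℝ}

theorem tendsto_div_of_isBigO_sub_mul (hg : ∀ᶠ x in l, g x ≠ 0) (hv : Tendsto v l (𝓝 0))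
    (h : (fun x => f x - g x) =O[l] fun x => g x * v x) :
    Tendsto (fun x => f x / g x) l (𝓝 1) ∧ (fun x => f x / g x - 1) =O[l] v := by
  have hratio : (fun x => f x / g x - 1) =O[l] v := by
    refine (h.mul (isBigO_refl (fun x => (g x)⁻¹) l)).congr' ?_ ?_ <;>
      filter_upwards [hg] with x hx <;> field_simp
  refine ⟨?_, hratio⟩
  simpa using (hratio.trans_tendsto hv).add_const 1

theorem isBigO_log_sub_log_of_isBigO_sub_mul (hg : ∀ᶠ x in l, g x ≠ 0)
    (hv : Tendsto v l (𝓝 0)) (h : (fun x => f x - g x) =O[l] fun x => g x * v x) :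
    (fun x => log (f x) - log (g x)) =O[l] v := by
  obtain ⟨hlim, hratio⟩ := tendsto_div_of_isBigO_sub_mul hg hv h
  refine (hlim.isBigO_log_sub_one.trans hratio).congr' ?_ EventuallyEq.rfl
  filter_upwards [hg, hlim.eventually_ne one_ne_zero] with x hgx hfg
  exact log_div (div_ne_zero_iff.1 hfg).1 hgx

end Ratio

theorem tendsto_atTop_of_monotone_of_comp_eq {α β : Type*} [LinearOrder α] [Nonempty α]
    [LinearOrder β] [TopologicalSpace β] [OrderTopology β] {g : α → β} {h : β → α} {c : β}
    (hg : Monotone g) (hlt : ∀ᶠ x in atTop, g x < c) (hinv : ∀ᶠ u in 𝓝[<] c, g (h u) = u) :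
    Tendsto h (𝓝[<] c) atTop := by
  refine tendsto_atTop.2 fun M => ?_
  obtain ⟨y, hyc, hMy⟩ := (hlt.and (eventually_ge_atTop M)).exists
  filter_upwards [Ioo_mem_nhdsLT hyc, hinv] with u hu hgu
  by_contra! hlt
  exact (hu.1.trans_eq hgu.symm).not_ge (hg (hlt.le.trans hMy))

theorem isBigO_inversion_linear_sub_log {L : ℝ → ℝ} {β p c : ℝ} (hβ : 0 < β)
    (hL : (fun x => L x - (β * x - p * log x - c)) =O[atTop] fun x => x⁻¹) :
    (fun x => x - (L x + p * log (L x) + c - p * log β) / β) =O[atTop]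
      fun x => log (L x) / L x := by
  set ε := fun x => L x - (β * x - p * log x - c) with hε
  have hβx : Tendsto (fun x => β * x) atTop atTop := tendsto_id.const_mul_atTop hβ
  have hdiff : (fun x => β * x - L x) =O[atTop] log := by
    have hεlog : ε =O[atTop] log :=
      hL.trans ((tendsto_inv_atTop_zero.isBigO_one ℝ).trans isLittleO_const_log_atTop.isBigO)
    refine (((isBigO_refl log atTop).const_mul_left p).add
      (isLittleO_const_log_atTop (c := c)).isBigO
      |>.sub hεlog).congr_left fun x => ?_
    simp only [hε]; ring
  have hequiv : L ~[atTop] fun x => β * x :=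
    IsLittleO.isEquivalent <| (hdiff.neg_left.trans_isLittleO isLittleO_log_id_atTop).trans_isBigO
      ((isBigO_refl id atTop).const_mul_right hβ.ne') |>.congr_left fun x => by simp
  have hLtop : Tendsto L atTop atTop := hequiv.symm.tendsto_atTop hβx
  have hlog : log =O[atTop] fun x => log (L x) := by
    have hlogβx : log =O[atTop] fun x => log (β * x) := by
      refine ((isBigO_refl _ atTop).sub
        ((isLittleO_const_log_atTop (c := log β)).comp_tendsto hβx).isBigO).congr' ?_
        EventuallyEq.rfl
      filter_upwards [eventually_gt_atTop 0] with x hx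
      simp [log_mul hβ.ne' hx.ne']
    exact hlogβx.trans (hequiv.log hβx).isBigO_symm
  have hone : (fun _ => (1 : ℝ)) =O[atTop] fun x => log (L x) :=
    (isLittleO_const_log_atTop.comp_tendsto hLtop).isBigO
  have hinv : (fun x => x⁻¹) =O[atTop] fun x => (L x)⁻¹ := by
    refine (hequiv.inv.isBigO_symm.const_mul_left β).congr_left fun x => ?_
    simp only [Pi.inv_apply]
    field_simp
  have hratio : Tendsto (fun x => β * x / L x) atTop (𝓝 1) :=
    (isEquivalent_iff_tendsto_one (hLtop.eventually_ne_atTop 0)).1 hequiv.symm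
  have hlogratio : (fun x => log (β * x / L x)) =O[atTop] fun x => log (L x) / L x := by
    refine hratio.isBigO_log_sub_one.trans ?_
    refine ((hdiff.trans hlog).mul (isBigO_refl (fun x => (L x)⁻¹) atTop)).congr' ?_ ?_
    · filter_upwards [hLtop.eventually_ne_atTop 0] with x hx
      field_simp
    · exact Eventually.of_forall fun x => (div_eq_mul_inv _ _).symm
  have hεO : ε =O[atTop] fun x => log (L x) / L x :=
    (hL.trans hinv).trans ((hone.mul (isBigO_refl (fun x => (L x)⁻¹) atTop)).congr_left
      fun x => one_mul _) |>.congr_right fun x => (div_eq_mul_inv _ _).symm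
  refine ((hlogratio.const_mul_left p).sub hεO |>.const_mul_left β⁻¹).congr' ?_ EventuallyEq.rfl
  filter_upwards [eventually_gt_atTop 0, hLtop.eventually_gt_atTop 0] with x hx hLx
  rw [log_div (by positivity) hLx.ne', log_mul hβ.ne' hx.ne']
  simp only [hε]
  field_simp
  ring

theorem integrableOn_rpow_mul_exp_neg_mul_Ioi (p : ℝ) {b x : ℝ} (hb : 0 < b) (hx : 0 < x) :
    IntegrableOn (fun t => t ^ p * exp (-b * t)) (Ioi x) := by
  refine integrable_of_isBigO_exp_neg (half_pos hb) ?_ ?_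
  · exact ContinuousOn.mul (fun t ht => (continuousAt_rpow_const t p
      (Or.inl (hx.trans_le ht).ne')).continuousWithinAt) (by fun_prop)
  · refine ((tendsto_rpow_mul_exp_neg_mul_atTop_nhds_zero p (b / 2) (half_pos hb)).isBigO_one ℝ
      |>.mul (isBigO_refl (fun t => exp (-(b / 2) * t)) atTop)).congr (fun t => ?_)
      fun t => one_mul _
    rw [mul_assoc, ← exp_add]
    ring_nf

theorem integral_Ioi_rpow_mul_exp_neg_mul (p : ℝ) {b x : ℝ} (hb : 0 < b) (hx : 0 < x) :
    ∫ t in Ioi x, t ^ p * exp (-b * t) =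
      x ^ p * exp (-b * x) / b + p / b * ∫ t in Ioi x, t ^ (p - 1) * exp (-b * t) := by
  have hderiv : ∀ t ∈ Ici x, HasDerivAt (fun t => -(t ^ p * exp (-b * t)) / b)
      (t ^ p * exp (-b * t) - p / b * (t ^ (p - 1) * exp (-b * t))) t := by
    intro t ht
    have hexp : HasDerivAt (fun t => exp (-b * t)) (exp (-b * t) * -b) t := by
      simpa using ((hasDerivAt_id t).const_mul (-b)).exp
    refine (((hasDerivAt_rpow_const (Or.inl (hx.trans_le ht).ne')).mul hexp).neg.div_const b)
      |>.congr_deriv ?_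
    field_simp
    ring
  have hlim : Tendsto (fun t => -(t ^ p * exp (-b * t)) / b) atTop (𝓝 0) := by
    simpa using (tendsto_rpow_mul_exp_neg_mul_atTop_nhds_zero p b hb).neg.div_const b
  have hint := integrableOn_rpow_mul_exp_neg_mul_Ioi p hb hx
  have hint' := (integrableOn_rpow_mul_exp_neg_mul_Ioi (p - 1) hb hx).const_mul (p / b)
  have := integral_Ioi_of_hasDerivAt_of_tendsto' hderiv (hint.sub hint') hlim
  rw [integral_sub hint hint', integral_const_mul] at this
  linear_combination this

theorem rpow_le_rpow_mul_exp_of_two_mul_abs_le {p b x t : ℝ} (hx : 0 < x) (hxt : x ≤ t)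
    (hp : 2 * |p| ≤ b * x) : t ^ p ≤ x ^ p * exp (b / 2 * (t - x)) := by
  have ht : 0 < t := hx.trans_le hxt
  rw [rpow_def_of_pos ht, rpow_def_of_pos hx, ← exp_add, exp_le_exp]
  have hlog_nonneg : 0 ≤ log t - log x := sub_nonneg.2 (log_le_log hx hxt)
  have hlog_le : log t - log x ≤ (t - x) / x := by
    have := log_le_sub_one_of_pos (div_pos ht hx)
    rwa [log_div ht.ne' hx.ne', div_sub_one hx.ne'] at this
  have hpx : |p| / x ≤ b / 2 := by
    rw [div_le_iff₀ hx]; linarith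
  calc log t * p = p * (log t - log x) + log x * p := by ring
    _ ≤ |p| * ((t - x) / x) + log x * p := by
        gcongr
        exact le_abs_self p
    _ = |p| / x * (t - x) + log x * p := by ring
    _ ≤ b / 2 * (t - x) + log x * p := by gcongr
    _ = _ := by ring

theorem isBigO_integral_Ioi_rpow_mul_exp_neg_mul (p : ℝ) {b : ℝ} (hb : 0 < b) :
    (fun x => ∫ t in Ioi x, t ^ p * exp (-b * t)) =O[atTop] fun x => x ^ p * exp (-b * x) := by
  refine IsBigO.of_bound (2 / b) ?_
  filter_upwards [eventually_gt_atTop 0, eventually_ge_atTop (2 * |p| / b)] with x hx hpx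
  rw [div_le_iff₀' hb] at hpx
  have hmajor : ∀ t ∈ Ioi x,
      t ^ p * exp (-b * t) ≤ x ^ p * exp (-(b / 2) * x) * exp (-(b / 2) * t) := by
    intro t ht
    calc t ^ p * exp (-b * t) ≤ x ^ p * exp (b / 2 * (t - x)) * exp (-b * t) := by
          gcongr; exact rpow_le_rpow_mul_exp_of_two_mul_abs_le hx (le_of_lt ht) hpx
      _ = x ^ p * exp (-(b / 2) * x) * exp (-(b / 2) * t) := by
          rw [mul_assoc, mul_assoc, ← exp_add, ← exp_add]; ring_nf
  have hnonneg : 0 ≤ ∫ t in Ioi x, t ^ p * exp (-b * t) :=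
    setIntegral_nonneg measurableSet_Ioi fun t ht => by
      have := rpow_nonneg (hx.trans ht).le p; positivity
  have hle := setIntegral_mono_on (integrableOn_rpow_mul_exp_neg_mul_Ioi p hb hx)
    ((integrableOn_exp_mul_Ioi (by linarith) x).const_mul _) measurableSet_Ioi hmajor
  rw [integral_const_mul, integral_exp_mul_Ioi (by linarith)] at hle
  rw [norm_of_nonneg hnonneg, norm_of_nonneg (by have := rpow_nonneg hx.le p; positivity)]
  refine hle.trans_eq ?_
  rw [show -b * x = -(b / 2) * x + -(b / 2) * x by ring, exp_add]
  field_simp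

theorem isBigO_integral_Ioi_rpow_mul_exp_neg_mul_sub (p : ℝ) {b : ℝ} (hb : 0 < b) :
    (fun x => (∫ t in Ioi x, t ^ p * exp (-b * t)) - x ^ p * exp (-b * x) / b) =O[atTop]
      fun x => x ^ p * exp (-b * x) / x := by
  refine ((isBigO_integral_Ioi_rpow_mul_exp_neg_mul (p - 1) hb).const_mul_left (p / b)).congr'
    ?_ ?_
  · filter_upwards [eventually_gt_atTop 0] with x hx
    rw [integral_Ioi_rpow_mul_exp_neg_mul p hb hx]
    ring
  · filter_upwards [eventually_gt_atTop 0] with x hx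
    rw [rpow_sub_one hx.ne']
    ring

noncomputable def gammaTail (α β x : ℝ) : ℝ :=
  β ^ α / Gamma α * ∫ t in Ioi x, t ^ (α - 1) * exp (-β * t)

section GammaDistribution

variable {α β : ℝ}

theorem integrableOn_gamma_density (hα : 0 < α) (hβ : 0 < β) :
    IntegrableOn (fun t => β ^ α / Gamma α * t ^ (α - 1) * exp (-β * t)) (Ioi 0) := by
  have := integrableOn_rpow_mul_exp_neg_mul_rpow (s := α - 1) (by linarith) one_pos hβ
  simp_rw [rpow_one] at this
  simpa [mul_assoc, IntegrableOn] using this.const_mul (β ^ α / Gamma α)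

theorem integral_Ioi_gamma_density (hα : 0 < α) (hβ : 0 < β) :
    ∫ t in Ioi 0, β ^ α / Gamma α * t ^ (α - 1) * exp (-β * t) = 1 := by
  simp_rw [mul_assoc, integral_const_mul, neg_mul]
  rw [integral_rpow_mul_exp_neg_mul_Ioi hα hβ, one_div, inv_rpow hβ.le]
  field_simp [(rpow_pos_of_pos hβ α).ne', (Gamma_pos_of_pos hα).ne']

theorem integral_Ioc_gamma_density (hα : 0 < α) (hβ : 0 < β) {x : ℝ} (hx : 0 ≤ x) :
    ∫ t in Ioc 0 x, β ^ α / Gamma α * t ^ (α - 1) * exp (-β * t) = 1 - gammaTail α β x := by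
  have hint := integrableOn_gamma_density hα hβ
  have hmass := integral_Ioi_gamma_density hα hβ
  rw [← Ioc_union_Ioi_eq_Ioi hx, setIntegral_union (Ioc_disjoint_Ioi le_rfl) measurableSet_Ioi
    (hint.mono_set Ioc_subset_Ioi_self) (hint.mono_set (Ioi_subset_Ioi hx))] at hmass
  simp_rw [mul_assoc, integral_const_mul] at hmass ⊢
  rw [gammaTail]
  linarith

theorem monotone_integral_Ioc_gamma_density (hα : 0 < α) (hβ : 0 < β) :
    Monotone fun x => ∫ t in Ioc 0 x, β ^ α / Gamma α * t ^ (α - 1) * exp (-β * t) :=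
  fun _ _ hxy => setIntegral_mono_set
    ((integrableOn_gamma_density hα hβ).mono_set Ioc_subset_Ioi_self)
    ((ae_restrict_iff' measurableSet_Ioc).2 <| ae_of_all _ fun t ht => by
      have := rpow_pos_of_pos ht.1 (α - 1)
      have := Gamma_pos_of_pos hα
      positivity)
    (Ioc_subset_Ioc_right hxy).eventuallyLE

theorem isBigO_gammaTail_sub (hα : 0 < α) (hβ : 0 < β) :
    (fun x => gammaTail α β x - β ^ (α - 1) / Gamma α * (x ^ (α - 1) * exp (-β * x)))
      =O[atTop] fun x => β ^ (α - 1) / Gamma α * (x ^ (α - 1) * exp (-β * x)) * x⁻¹ := by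
  have hA : β ^ (α - 1) / Gamma α ≠ 0 := by
    have := Gamma_pos_of_pos hα
    have := rpow_pos_of_pos hβ (α - 1)
    positivity
  refine (((isBigO_integral_Ioi_rpow_mul_exp_neg_mul_sub (α - 1) hβ).const_mul_left
    (β ^ α / Gamma α)).trans ((isBigO_refl _ atTop).const_mul_right hA)).congr
    (fun x => ?_) fun x => ?_
  · rw [gammaTail, rpow_sub_one hβ.ne']
    ring
  · ring

theorem eventually_gammaTail_pos (hα : 0 < α) (hβ : 0 < β) :
    ∀ᶠ x in atTop, 0 < gammaTail α β x := by
  have hAE : ∀ᶠ x in atTop, 0 < β ^ (α - 1) / Gamma α * (x ^ (α - 1) * exp (-β * x)) := by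
    filter_upwards [eventually_gt_atTop 0] with x hx
    have := Gamma_pos_of_pos hα
    have := rpow_pos_of_pos hβ (α - 1)
    have := rpow_pos_of_pos hx (α - 1)
    positivity
  obtain ⟨hratio, -⟩ := tendsto_div_of_isBigO_sub_mul (hAE.mono fun _ h => h.ne')
    tendsto_inv_atTop_zero (isBigO_gammaTail_sub hα hβ)
  filter_upwards [hAE, hratio.eventually (eventually_gt_nhds one_pos)] with x hx hpos
  exact (div_pos_iff_of_pos_right hx).1 hpos

theorem isBigO_neg_log_gammaTail_sub (hα : 0 < α) (hβ : 0 < β) :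
    (fun x => -log (gammaTail α β x) -
      (β * x - (α - 1) * log x - ((α - 1) * log β - log (Gamma α)))) =O[atTop] fun x => x⁻¹ := by
  have hΓ := Gamma_pos_of_pos hα
  have hβα := rpow_pos_of_pos hβ (α - 1)
  have hAE : ∀ᶠ x in atTop, β ^ (α - 1) / Gamma α * (x ^ (α - 1) * exp (-β * x)) ≠ 0 := by
    filter_upwards [eventually_gt_atTop 0] with x hx
    have := rpow_pos_of_pos hx (α - 1)
    positivity
  refine (isBigO_log_sub_log_of_isBigO_sub_mul hAE tendsto_inv_atTop_zero
    (isBigO_gammaTail_sub hα hβ)).neg_left.congr' ?_ EventuallyEq.rfl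
  filter_upwards [eventually_gt_atTop 0] with x hx
  have := rpow_pos_of_pos hx (α - 1)
  rw [log_mul (by positivity) (by positivity), log_mul (by positivity) (by positivity),
    log_div hβα.ne' hΓ.ne', log_rpow hβ, log_rpow hx, log_exp]
  ring

end GammaDistribution

theorem gamma_upper_quantile_expansion_general
    (g h : ℝ → ℝ) (α β : ℝ) (hα : 0 < α) (hβ : 0 < β)
    (hg : ∀ x, g x = ∫ t in Set.Ioc (0:ℝ) x,
      (β ^ α / Real.Gamma α) * t ^ (α - 1) * Real.exp (-β * t))
    (hinv : ∀ u ∈ Set.Ioo (0:ℝ) 1, g (h u) = u) :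
    ((fun x => g x - (1 - (β ^ (α - 1) / Real.Gamma α) * x ^ (α - 1) * Real.exp (-β * x)))
        =O[atTop]
      (fun x => (β ^ (α - 1) / Real.Gamma α) * x ^ (α - 1) * Real.exp (-β * x) / x) ∧
     (fun u => h u -
        (-(1 / β) * Real.log (1 - u)
          + ((α - 1) / β) * Real.log |Real.log (1 - u)|
          - (1 / β) * Real.log (Real.Gamma α)))
        =O[𝓝[<] (1:ℝ)]
      (fun u => Real.log |Real.log (1 - u)| / |Real.log (1 - u)|)) := by
  obtain rfl : g = _ := funext hg
  have hcdf := fun x (hx : 0 ≤ x) => integral_Ioc_gamma_density hα hβ hx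
  refine ⟨(isBigO_gammaTail_sub hα hβ).neg_left.congr' ?_ (.of_forall fun x => by ring), ?_⟩
  · filter_upwards [eventually_ge_atTop 0] with x hx
    rw [hcdf x hx]
    ring
  have hh : Tendsto h (𝓝[<] 1) atTop := by
    refine tendsto_atTop_of_monotone_of_comp_eq (monotone_integral_Ioc_gamma_density hα hβ) ?_
      (mem_of_superset (Ioo_mem_nhdsLT zero_lt_one) hinv)
    filter_upwards [eventually_ge_atTop 0, eventually_gammaTail_pos hα hβ] with x hx hT
    rw [hcdf x hx]
    linarith
  have htail : ∀ᶠ u in 𝓝[<] (1 : ℝ),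
      gammaTail α β (h u) = 1 - u ∧ |log (1 - u)| = -log (1 - u) := by
    filter_upwards [Ioo_mem_nhdsLT zero_lt_one, hh.eventually (eventually_ge_atTop 0)]
      with u hu hhu
    refine ⟨by linarith [hcdf _ hhu, hinv u hu], abs_of_neg (log_neg ?_ ?_)⟩ <;>
      linarith [hu.1, hu.2]
  refine ((isBigO_inversion_linear_sub_log hβ (isBigO_neg_log_gammaTail_sub hα hβ)).comp_tendsto
    hh).congr' ?_ ?_ <;> filter_upwards [htail] with u ⟨hT, habs⟩ <;>
    simp only [Function.comp_apply, hT, habs]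
  ring

/-- Gamma distribution: upper tail estimate of the cdf and expansion of the
upper quantile function. -/
theorem gamma_upper_quantile_expansion
    (g h : ℝ → ℝ) (α β : ℝ) (hα : 0 < α) (hβ : 0 < β) (hα1 : α ≠ 1)
    (hg : ∀ x, g x = ∫ t in Set.Ioc (0:ℝ) x,
      (β ^ α / Real.Gamma α) * t ^ (α - 1) * Real.exp (-β * t))
    (hinv : ∀ u ∈ Set.Ioo (0:ℝ) 1, g (h u) = u) :
    ((fun x => g x - (1 - (β ^ (α - 1) / Real.Gamma α) * x ^ (α - 1) * Real.exp (-β * x)))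
        =O[atTop]
      (fun x => (β ^ (α - 1) / Real.Gamma α) * x ^ (α - 1) * Real.exp (-β * x) / x) ∧
     (fun u => h u -
        (-(1 / β) * Real.log (1 - u)
          + ((α - 1) / β) * Real.log |Real.log (1 - u)|
          - (1 / β) * Real.log (Real.Gamma α)))
        =O[𝓝[<] (1:ℝ)]
      (fun u => Real.log |Real.log (1 - u)| / |Real.log (1 - u)|)) :=
  gamma_upper_quantile_expansion_general g h α β hα hβ hg hinv
end

section
/- Let λ(u) = 2Φ(Φ^{-1}(u)√((1-ρ)/(1+ρ))) and θ = (1-ρ)/(1+ρ). If λ(u) ~ u^θ L(u) as u → 0⁺ with L slowly varying at 0, then the bivariate Normal tail dependence function λ_L(u) = C(u,u)/u satisfies λ_L(u) ~ u^θ L(u)/(θ + 1) as u → 0⁺. -/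
open Filter Topology Asymptotics Real MeasureTheory

section AuxGaussian
open Set

noncomputable def stdG (t : ℝ) : ℝ := Real.exp (-t ^ 2 / 2) / Real.sqrt (2 * Real.pi)

lemma stdG_pos (t : ℝ) : 0 < stdG t := by
  apply div_pos (Real.exp_pos _)
  exact Real.sqrt_pos.2 (by positivity)

lemma stdG_cont : Continuous stdG := by
  unfold stdG; fun_prop

lemma integrable_stdG : Integrable stdG := by
  have h : Integrable (fun t : ℝ => Real.exp (-(2⁻¹ : ℝ) * t ^ 2)) :=
    integrable_exp_neg_mul_sq (by norm_num)
  have := h.div_const (Real.sqrt (2 * Real.pi))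
  convert this using 2 with t
  simp only [stdG]
  ring_nf

lemma integral_stdG : ∫ t, stdG t = 1 := by
  have h : ∫ t : ℝ, Real.exp (-(2⁻¹ : ℝ) * t ^ 2) = Real.sqrt (Real.pi / 2⁻¹) :=
    integral_gaussian _
  unfold stdG
  rw [integral_div]
  rw [show (fun t : ℝ => Real.exp (-t ^ 2 / 2)) = fun t : ℝ => Real.exp (-(2⁻¹ : ℝ) * t ^ 2) by
    funext t; ring_nf]
  rw [h]
  rw [div_eq_one_iff_eq (by positivity)]
  norm_num [mul_comm]

noncomputable def stdPhi (x : ℝ) : ℝ := ∫ t in Set.Iic x, stdG t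

lemma stdPhi_sub {a b : ℝ} (hab : a ≤ b) :
    stdPhi b - stdPhi a = ∫ t in Set.Ioc a b, stdG t := by
  have h : Set.Iic a ∪ Set.Ioc a b = Set.Iic b := Set.Iic_union_Ioc_eq_Iic hab
  have := setIntegral_union (f := stdG) (μ := volume) (s := Set.Iic a) (t := Set.Ioc a b)
    (Set.Iic_disjoint_Ioc le_rfl) measurableSet_Ioc
    integrable_stdG.integrableOn integrable_stdG.integrableOn
  rw [h] at this
  simp only [stdPhi]
  rw [this]; ring

lemma stdPhi_strictMono : StrictMono stdPhi := by
  intro a b hab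
  have h : 0 < ∫ t in Set.Ioc a b, stdG t := by
    rw [setIntegral_pos_iff_support_of_nonneg_ae
      (Filter.Eventually.of_forall fun t => (stdG_pos t).le) integrable_stdG.integrableOn]
    have : Function.support stdG = Set.univ := by
      ext t; simp [Function.mem_support, (stdG_pos t).ne']
    rw [this, Set.univ_inter, Real.volume_Ioc]
    simp [hab]
  have := stdPhi_sub hab.le
  linarith

lemma stdPhi_pos (x : ℝ) : 0 < stdPhi x := by
  rw [stdPhi, setIntegral_pos_iff_support_of_nonneg_ae
    (Filter.Eventually.of_forall fun t => (stdG_pos t).le) integrable_stdG.integrableOn]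
  have : Function.support stdG = Set.univ := by
    ext t; simp [Function.mem_support, (stdG_pos t).ne']
  rw [this, Set.univ_inter]
  simp [Real.volume_Iic]

lemma stdPhi_lt_one (x : ℝ) : stdPhi x < 1 := by
  have hc : (∫ t in Set.Iic x, stdG t) + ∫ t in (Set.Iic x)ᶜ, stdG t = ∫ t, stdG t :=
    integral_add_compl measurableSet_Iic integrable_stdG
  have h2 : 0 < ∫ t in (Set.Iic x)ᶜ, stdG t := by
    rw [setIntegral_pos_iff_support_of_nonneg_ae
      (Filter.Eventually.of_forall fun t => (stdG_pos t).le) integrable_stdG.integrableOn]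
    have : Function.support stdG = Set.univ := by
      ext t; simp [Function.mem_support, (stdG_pos t).ne']
    rw [this, Set.univ_inter, Set.compl_Iic, Real.volume_Ioi]
    simp
  rw [integral_stdG] at hc
  simp only [stdPhi]
  linarith

lemma hasDerivAt_stdPhi (x : ℝ) : HasDerivAt stdPhi (stdG x) x := by
  have key : ∀ y, stdPhi y = stdPhi 0 + ∫ t in (0:ℝ)..y, stdG t := by
    intro y
    rcases le_total 0 y with h | h
    · rw [intervalIntegral.integral_of_le h, ← stdPhi_sub h]; ring
    · rw [intervalIntegral.integral_of_ge h, ← stdPhi_sub h]; ring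
  have hF : HasDerivAt (fun y => stdPhi 0 + ∫ t in (0:ℝ)..y, stdG t) (stdG x) x := by
    apply HasDerivAt.const_add
    exact intervalIntegral.integral_hasDerivAt_right
      integrable_stdG.intervalIntegrable
      stdG_cont.stronglyMeasurable.stronglyMeasurableAtFilter
      stdG_cont.continuousAt
  exact hF.congr_of_eventuallyEq (Filter.Eventually.of_forall key)

lemma continuous_stdPhi : Continuous stdPhi :=
  continuous_iff_continuousAt.2 fun x => (hasDerivAt_stdPhi x).continuousAt

lemma tendsto_stdPhi_atBot : Tendsto stdPhi atBot (𝓝 0) := by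
  have heq : ∀ x, stdPhi x = ∫ t, (Set.Iic x).indicator stdG t := fun x =>
    (integral_indicator measurableSet_Iic).symm
  have h0 : (0 : ℝ) = ∫ _ : ℝ, (0 : ℝ) := by simp
  rw [funext heq, h0]
  apply tendsto_integral_filter_of_dominated_convergence stdG
  · exact Filter.Eventually.of_forall fun x =>
      (stdG_cont.stronglyMeasurable.indicator measurableSet_Iic).aestronglyMeasurable
  · refine Filter.Eventually.of_forall fun x => Filter.Eventually.of_forall fun t => ?_
    rw [Set.indicator]
    split
    · rw [Real.norm_of_nonneg (stdG_pos t).le]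
    · simpa using (stdG_pos t).le
  · exact integrable_stdG
  · refine Filter.Eventually.of_forall fun t => ?_
    apply tendsto_const_nhds.congr'
    filter_upwards [eventually_lt_atBot t] with x hx
    simp [Set.indicator, Set.mem_Iic, not_le.2 hx]

lemma stdPhi_image (b : ℝ) : stdPhi '' Set.Iic b = Set.Ioc 0 (stdPhi b) := by
  apply Set.Subset.antisymm
  · rintro _ ⟨x, hx, rfl⟩
    exact ⟨stdPhi_pos x, stdPhi_strictMono.monotone hx⟩
  · rintro y ⟨hy0, hyb⟩
    have hev : ∀ᶠ x in atBot, stdPhi x < y := tendsto_stdPhi_atBot.eventually_lt_const hy0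
    obtain ⟨x₀, hx₀⟩ := hev.exists
    have hx₀b : x₀ ≤ b := by
      by_contra h
      exact absurd (stdPhi_strictMono.monotone (le_of_not_ge h)) (by linarith)
    obtain ⟨x, hx, hxy⟩ := intermediate_value_Icc hx₀b continuous_stdPhi.continuousOn
      ⟨hx₀.le, hyb⟩
    exact ⟨x, hx.2, hxy⟩

lemma sqrt_ratio {ρ : ℝ} (h1 : -1 < ρ) (h2 : ρ < 1) (x : ℝ) :
    (x - ρ * x) / Real.sqrt (1 - ρ ^ 2) = x * Real.sqrt ((1 - ρ) / (1 + ρ)) := by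
  have hm : 0 < 1 - ρ := by linarith
  have hp : 0 < 1 + ρ := by linarith
  have hfac : Real.sqrt (1 - ρ ^ 2) = Real.sqrt (1 - ρ) * Real.sqrt (1 + ρ) := by
    rw [← Real.sqrt_mul hm.le]; ring_nf
  have hq : Real.sqrt ((1 - ρ) / (1 + ρ)) = Real.sqrt (1 - ρ) / Real.sqrt (1 + ρ) :=
    Real.sqrt_div hm.le _
  have hsm : Real.sqrt (1 - ρ) ≠ 0 := by positivity
  have hsp : Real.sqrt (1 + ρ) ≠ 0 := by positivity
  have hsq : Real.sqrt (1 - ρ) * Real.sqrt (1 - ρ) = 1 - ρ := Real.mul_self_sqrt hm.le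
  rw [hfac, hq]
  field_simp
  linear_combination (-x) * hsq

lemma gauss_inner {ρ : ℝ} (h1 : -1 < ρ) (h2 : ρ < 1) (x : ℝ) :
    (∫ y in Set.Iic x, (1 / (2 * Real.pi * Real.sqrt (1 - ρ ^ 2))) *
      Real.exp (-(x ^ 2 - 2 * ρ * x * y + y ^ 2) / (2 * (1 - ρ ^ 2))))
    = stdG x * stdPhi (x * Real.sqrt ((1 - ρ) / (1 + ρ))) := by
  have hvar : (0:ℝ) < 1 - ρ ^ 2 := by nlinarith
  set s : ℝ := Real.sqrt (1 - ρ ^ 2) with hs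
  have hs0 : 0 < s := Real.sqrt_pos.2 hvar
  have hs2 : s ^ 2 = 1 - ρ ^ 2 := Real.sq_sqrt hvar.le
  have h2pi : (0:ℝ) < 2 * Real.pi := by positivity
  have hq : Real.sqrt (2 * Real.pi) * Real.sqrt (2 * Real.pi) = 2 * Real.pi :=
    Real.mul_self_sqrt h2pi.le
  have key : ∀ y : ℝ, (1 / (2 * Real.pi * s)) *
      Real.exp (-(x ^ 2 - 2 * ρ * x * y + y ^ 2) / (2 * (1 - ρ ^ 2)))
      = (stdG x / s) * stdG ((y - ρ * x) / s) := by
    intro y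
    simp only [stdG]
    have hexp : -(x ^ 2 - 2 * ρ * x * y + y ^ 2) / (2 * (1 - ρ ^ 2))
        = (-x ^ 2 / 2) + (-((y - ρ * x) / s) ^ 2 / 2) := by
      rw [div_pow, hs2]
      field_simp
      ring
    rw [hexp, Real.exp_add]
    field_simp
    ring_nf
    rw [Real.sq_sqrt (by positivity)]
  rw [setIntegral_congr_fun measurableSet_Iic (fun y _ => key y)]
  rw [integral_const_mul]
  have himg : (fun r => ρ * x + s * r) '' Set.Iic ((x - ρ * x) / s) = Set.Iic x := by
    ext y
    constructor
    · rintro ⟨r, hr, rfl⟩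
      have : s * r ≤ s * ((x - ρ * x) / s) := by
        exact mul_le_mul_of_nonneg_left hr hs0.le
      rw [mul_div_cancel₀ _ hs0.ne'] at this
      simpa using by linarith
    · intro hy
      refine ⟨(y - ρ * x) / s, ?_, ?_⟩
      · rw [Set.mem_Iic]
        have hyx : y ≤ x := hy
        gcongr
      · field_simp; ring
  have hderiv : ∀ r ∈ Set.Iic ((x - ρ * x) / s),
      HasDerivWithinAt (fun r => ρ * x + s * r) s (Set.Iic ((x - ρ * x) / s)) r := by
    intro r _
    have h' : HasDerivAt (fun r : ℝ => ρ * x + s * r) s r := by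
      simpa using ((hasDerivAt_id r).const_mul s).const_add (ρ * x)
    exact h'.hasDerivWithinAt
  have hinj : Set.InjOn (fun r => ρ * x + s * r) (Set.Iic ((x - ρ * x) / s)) := by
    intro r _ r' _ h
    dsimp only at h
    have h2 : s * r = s * r' := by linarith
    exact mul_left_cancel₀ hs0.ne' h2
  have hsub : (∫ y in Set.Iic x, stdG ((y - ρ * x) / s))
      = s * stdPhi ((x - ρ * x) / s) := by
    rw [← himg]
    rw [integral_image_eq_integral_abs_deriv_smul measurableSet_Iic hderiv hinj]
    simp only [smul_eq_mul, abs_of_pos hs0]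
    have : ∀ r : ℝ, (ρ * x + s * r - ρ * x) / s = r := by
      intro r; field_simp; ring
    simp_rw [this]
    rw [integral_const_mul]
    rfl
  rw [hsub, sqrt_ratio h1 h2]
  field_simp

section Square
variable {ρ : ℝ}

noncomputable def bvnd (ρ : ℝ) (p : ℝ × ℝ) : ℝ :=
  (1 / (2 * Real.pi * Real.sqrt (1 - ρ ^ 2))) *
    Real.exp (-(p.1 ^ 2 - 2 * ρ * p.1 * p.2 + p.2 ^ 2) / (2 * (1 - ρ ^ 2)))

lemma bvnd_swap (p : ℝ × ℝ) : bvnd ρ p.swap = bvnd ρ p := by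
  simp only [bvnd, Prod.swap]
  ring_nf

lemma bvnd_cont : Continuous (bvnd ρ) := by
  unfold bvnd; fun_prop

lemma bvnd_nonneg (p : ℝ × ℝ) : 0 ≤ bvnd ρ p := by
  unfold bvnd; positivity

lemma integrable_bvnd (h1 : -1 < ρ) (h2 : ρ < 1) : Integrable (bvnd ρ) := by
  have hvar : (0:ℝ) < 1 - ρ ^ 2 := by nlinarith
  set c : ℝ := (1 - |ρ|) / (2 * (1 - ρ ^ 2)) with hc
  have habs : |ρ| < 1 := abs_lt.2 ⟨h1, h2⟩
  have hc0 : 0 < c := by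
    apply div_pos (by linarith) (by linarith)
  have hK : (0:ℝ) < 1 / (2 * Real.pi * Real.sqrt (1 - ρ ^ 2)) := by positivity
  set K := 1 / (2 * Real.pi * Real.sqrt (1 - ρ ^ 2)) with hKdef
  have hbound : Integrable (fun p : ℝ × ℝ =>
      K * (Real.exp (-c * p.1 ^ 2) * Real.exp (-c * p.2 ^ 2))) := by
    rw [Measure.volume_eq_prod]
    exact ((integrable_exp_neg_mul_sq hc0).mul_prod (integrable_exp_neg_mul_sq hc0)).const_mul K
  apply hbound.mono' (bvnd_cont.aestronglyMeasurable)
  refine Filter.Eventually.of_forall fun p => ?_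
  rw [Real.norm_of_nonneg (bvnd_nonneg p)]
  unfold bvnd
  rw [← hKdef]
  apply mul_le_mul_of_nonneg_left _ hK.le
  rw [← Real.exp_add]
  apply Real.exp_le_exp.2
  -- -(x² - 2ρxy + y²)/(2(1-ρ²)) ≤ -c x² + -c y²
  have hq : (1 - |ρ|) * (p.1 ^ 2 + p.2 ^ 2) ≤ p.1 ^ 2 - 2 * ρ * p.1 * p.2 + p.2 ^ 2 := by
    have h1' : 2 * (ρ * (p.1 * p.2)) ≤ |ρ| * (p.1 ^ 2 + p.2 ^ 2) := by
      have : ρ * (p.1 * p.2) ≤ |ρ * (p.1 * p.2)| := le_abs_self _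
      rw [abs_mul, abs_mul] at this
      nlinarith [sq_nonneg (|p.1| - |p.2|), sq_abs p.1, sq_abs p.2, abs_nonneg ρ,
        abs_nonneg p.1, abs_nonneg p.2]
    nlinarith
  have hD : (0:ℝ) < 2 * (1 - ρ ^ 2) := by linarith
  calc -(p.1 ^ 2 - 2 * ρ * p.1 * p.2 + p.2 ^ 2) / (2 * (1 - ρ ^ 2))
      = -((p.1 ^ 2 - 2 * ρ * p.1 * p.2 + p.2 ^ 2) / (2 * (1 - ρ ^ 2))) := by ring
    _ ≤ -((1 - |ρ|) * (p.1 ^ 2 + p.2 ^ 2) / (2 * (1 - ρ ^ 2))) := by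
        apply neg_le_neg
        exact (div_le_div_iff_of_pos_right hD).2 hq
    _ = -c * p.1 ^ 2 + -c * p.2 ^ 2 := by rw [hc]; ring

lemma diag_null : (volume : Measure (ℝ × ℝ)) {p : ℝ × ℝ | p.1 = p.2} = 0 := by
  have hm : MeasurableSet {p : ℝ × ℝ | p.1 = p.2} :=
    measurableSet_eq_fun measurable_fst measurable_snd
  rw [Measure.volume_eq_prod, Measure.prod_apply hm]
  have : ∀ x : ℝ, (Prod.mk x ⁻¹' {p : ℝ × ℝ | p.1 = p.2}) = {x} := by
    intro x; ext y; simp [eq_comm]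
  simp only [this]
  simp

lemma gauss_square (h1 : -1 < ρ) (h2 : ρ < 1) (a : ℝ) :
    (∫ p in Set.Iic a ×ˢ Set.Iic a, bvnd ρ p)
    = ∫ x in Set.Iic a, 2 * (stdG x * stdPhi (x * Real.sqrt ((1 - ρ) / (1 + ρ)))) := by
  set T : Set (ℝ × ℝ) := {p | p.2 < p.1} with hT
  have hTm : MeasurableSet T := measurableSet_lt measurable_snd measurable_fst
  set sq : Set (ℝ × ℝ) := Set.Iic a ×ˢ Set.Iic a with hsq
  have hsqm : MeasurableSet sq := (measurableSet_Iic).prod (measurableSet_Iic)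
  have hint := integrable_bvnd h1 h2
  -- split
  have hsplit : (∫ p in sq, bvnd ρ p)
      = (∫ p in sq ∩ T, bvnd ρ p) + ∫ p in sq ∩ Tᶜ, bvnd ρ p := by
    rw [← setIntegral_union (disjoint_compl_right.mono Set.inter_subset_right
      Set.inter_subset_right) (hsqm.inter hTm.compl)
      hint.integrableOn hint.integrableOn, Set.inter_union_compl]
  -- compl to strict
  have hcompl : (∫ p in sq ∩ Tᶜ, bvnd ρ p) = ∫ p in sq ∩ {p : ℝ × ℝ | p.1 < p.2}, bvnd ρ p := by
    apply setIntegral_congr_set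
    rw [MeasureTheory.ae_eq_set]
    constructor
    · apply measure_mono_null _ diag_null
      rintro ⟨x, y⟩ ⟨⟨hsqp, hxy⟩, hns⟩
      have h1' : ¬ y < x := by simpa [hT] using hxy
      have h2' : ¬ x < y := fun h => hns ⟨hsqp, by simpa using h⟩
      show x = y
      exact le_antisymm (not_lt.1 h1') (not_lt.1 h2')
    · apply measure_mono_null _ diag_null
      rintro ⟨x, y⟩ ⟨⟨hsqp, hxy⟩, hns⟩
      have hxy' : x < y := by simpa using hxy
      exact (hns ⟨hsqp, by simpa [hT] using not_lt.2 hxy'.le⟩).elim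
  -- swap
  have hswap : (∫ p in sq ∩ {p : ℝ × ℝ | p.1 < p.2}, bvnd ρ p) = ∫ p in sq ∩ T, bvnd ρ p := by
    have hpre : Prod.swap ⁻¹' (sq ∩ T) = sq ∩ {p : ℝ × ℝ | p.1 < p.2} := by
      ext ⟨x, y⟩
      simp only [Set.mem_preimage, Prod.swap_prod_mk, Set.mem_inter_iff, hsq, hT,
        Set.mem_prod, Set.mem_setOf_eq, Set.mem_Iic]
      tauto
    have h₁ : MeasurePreserving (Prod.swap : ℝ × ℝ → ℝ × ℝ)
        ((volume : Measure ℝ).prod volume) ((volume : Measure ℝ).prod volume) :=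
      Measure.measurePreserving_swap
    have key := h₁.setIntegral_preimage_emb
      (MeasurableEquiv.prodComm (α := ℝ) (β := ℝ)).measurableEmbedding (bvnd ρ) (sq ∩ T)
    simp_rw [bvnd_swap] at key
    rw [Measure.volume_eq_prod, ← hpre]
    exact key
  -- fubini
  have hI : IntegrableOn (T.indicator (bvnd ρ)) sq ((volume : Measure ℝ).prod volume) := by
    rw [← Measure.volume_eq_prod]
    exact (hint.indicator hTm).integrableOn
  have hfub : (∫ p in sq ∩ T, bvnd ρ p)
      = ∫ x in Set.Iic a, stdG x * stdPhi (x * Real.sqrt ((1 - ρ) / (1 + ρ))) := by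
    rw [← setIntegral_indicator hTm, Measure.volume_eq_prod, hsq,
      setIntegral_prod _ (by rw [← hsq]; exact hI)]
    apply setIntegral_congr_fun measurableSet_Iic
    intro x hx
    dsimp only
    have hind : ∀ y : ℝ, T.indicator (bvnd ρ) (x, y)
        = (Set.Iio x).indicator (fun y => bvnd ρ (x, y)) y := by
      intro y
      by_cases h : y < x <;> simp [Set.indicator, hT, h]
    rw [setIntegral_congr_fun measurableSet_Iic (fun y _ => hind y),
      setIntegral_indicator measurableSet_Iio,
      Set.inter_eq_self_of_subset_right (Set.Iio_subset_Iic_self.trans (Set.Iic_subset_Iic.2 hx)),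
      setIntegral_congr_set Iio_ae_eq_Iic]
    simpa only [bvnd] using gauss_inner h1 h2 x
  rw [hsplit, hcompl, hswap, hfub, integral_const_mul]
  ring
end Square

lemma copula_eq (PhiInv : ℝ → ℝ) (hinv : ∀ u ∈ Set.Ioo (0:ℝ) 1, stdPhi (PhiInv u) = u)
    {ρ : ℝ} (h1 : -1 < ρ) (h2 : ρ < 1) {u : ℝ} (hu : u ∈ Set.Ioo (0:ℝ) 1)
    (N : ℝ → ℝ)
    (hN : ∀ s ∈ Set.Ioo (0:ℝ) 1, N s = 2 * stdPhi (PhiInv s * Real.sqrt ((1-ρ)/(1+ρ)))) :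
    (∫ p in Set.Iic (PhiInv u) ×ˢ Set.Iic (PhiInv u), bvnd ρ p)
    = ∫ s in Set.Ioc (0:ℝ) u, N s := by
  have hPinv : ∀ x : ℝ, PhiInv (stdPhi x) = x := by
    intro x
    exact stdPhi_strictMono.injective (hinv _ ⟨stdPhi_pos x, stdPhi_lt_one x⟩)
  have hub : stdPhi (PhiInv u) = u := hinv u hu
  rw [gauss_square h1 h2 (PhiInv u)]
  have hderiv : ∀ x ∈ Set.Iic (PhiInv u),
      HasDerivWithinAt stdPhi (stdG x) (Set.Iic (PhiInv u)) x :=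
    fun x _ => (hasDerivAt_stdPhi x).hasDerivWithinAt
  have key := integral_image_eq_integral_abs_deriv_smul measurableSet_Iic hderiv
    (stdPhi_strictMono.injective.injOn) N
  rw [stdPhi_image (PhiInv u), hub] at key
  rw [key]
  apply setIntegral_congr_fun measurableSet_Iic
  intro x _
  dsimp only
  rw [smul_eq_mul, abs_of_pos (stdG_pos x), hN _ ⟨stdPhi_pos x, stdPhi_lt_one x⟩, hPinv x]
  ring

lemma mul_self_tendsto_nhdsWithin {t : ℝ} (ht : 0 < t) :
    Tendsto (fun u : ℝ => t * u) (𝓝[>] (0:ℝ)) (𝓝[>] (0:ℝ)) := by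
  apply tendsto_nhdsWithin_of_tendsto_nhds_of_eventually_within
  · have : Tendsto (fun u : ℝ => t * u) (𝓝 0) (𝓝 (t * 0)) :=
      (continuous_const.mul continuous_id).tendsto 0
    simpa using this.mono_left nhdsWithin_le_nhds
  · filter_upwards [self_mem_nhdsWithin] with u hu
    exact mul_pos ht hu

lemma karamata_light (θ : ℝ) (hθ : 0 < θ) (N L : ℝ → ℝ) (hNmono : Monotone N)
    (hN0 : ∀ s, 0 ≤ N s)
    (hLpos : ∀ w > 0, 0 < L w)
    (hL_slow : ∀ l > 0, Tendsto (fun w => L (l * w) / L w) (𝓝[>] (0:ℝ)) (𝓝 1))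
    (hlamN : Tendsto (fun u => N u / (u ^ θ * L u)) (𝓝[>] (0:ℝ)) (𝓝 1)) :
    Tendsto (fun u => (∫ t in Set.Ioc (0:ℝ) 1, N (u * t)) / (u ^ θ * L u)) (𝓝[>] (0:ℝ))
      (𝓝 (1 / (θ + 1))) := by
  have hc : ∀ u : ℝ, 0 < u → 0 < u ^ θ * L u := fun u hu =>
    mul_pos (Real.rpow_pos_of_pos hu θ) (hLpos u hu)
  have hval : (∫ t in Set.Ioc (0:ℝ) 1, t ^ θ) = 1 / (θ + 1) := by
    rw [← intervalIntegral.integral_of_le zero_le_one, integral_rpow (Or.inl (by linarith))]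
    rw [Real.one_rpow, Real.zero_rpow (by linarith), sub_zero]
  have hmain : Tendsto (fun u => ∫ t in Set.Ioc (0:ℝ) 1, N (u * t) / (u ^ θ * L u))
      (𝓝[>] (0:ℝ)) (𝓝 (∫ t in Set.Ioc (0:ℝ) 1, t ^ θ)) := by
    apply tendsto_integral_filter_of_dominated_convergence (fun _ => (2:ℝ))
    · filter_upwards [self_mem_nhdsWithin] with u hu
      exact (((hNmono.measurable).comp (measurable_id.const_mul u)).div_const
        _).aestronglyMeasurable
    · filter_upwards [self_mem_nhdsWithin,
        hlamN.eventually_lt_const (by norm_num : (1:ℝ) < 2)] with u hu hub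
      rw [Set.mem_Ioi] at hu
      rw [ae_restrict_iff' measurableSet_Ioc]
      apply ae_of_all
      intro t ht
      have hNu : N (u * t) ≤ N u := hNmono (by nlinarith [ht.1.le, ht.2] : u * t ≤ u)
      have hcu := hc u hu
      rw [Real.norm_of_nonneg (div_nonneg (hN0 _) hcu.le)]
      calc N (u * t) / (u ^ θ * L u) ≤ N u / (u ^ θ * L u) := by gcongr
        _ ≤ 2 := (le_of_lt hub)
    · have : IntegrableOn (fun _ : ℝ => (2:ℝ)) (Set.Ioc (0:ℝ) 1) volume := by
        rw [integrableOn_const_iff]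
        exact Or.inr (by simp [Real.volume_Ioc])
      exact this
    · rw [ae_restrict_iff' measurableSet_Ioc]
      apply ae_of_all
      intro t ht
      obtain ⟨ht0, ht1⟩ := ht
      have htu := mul_self_tendsto_nhdsWithin ht0
      have hfac1 : Tendsto (fun u => N (t * u) / ((t * u) ^ θ * L (t * u)))
          (𝓝[>] (0:ℝ)) (𝓝 1) := hlamN.comp htu
      have hfac2 := hL_slow t ht0
      have hcomb := (hfac1.mul (tendsto_const_nhds (x := t ^ θ) (f := 𝓝[>] (0:ℝ)))).mul hfac2
      rw [show (1 * t ^ θ) * 1 = t ^ θ by ring] at hcomb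
      apply hcomb.congr'
      filter_upwards [self_mem_nhdsWithin] with u hu
      rw [Set.mem_Ioi] at hu
      have h1 : (t * u) ^ θ = t ^ θ * u ^ θ := Real.mul_rpow ht0.le hu.le
      have hL1 : L (t * u) ≠ 0 := (hLpos _ (by positivity)).ne'
      have hLu : L u ≠ 0 := (hLpos _ hu).ne'
      have ht' : t ^ θ ≠ 0 := (Real.rpow_pos_of_pos ht0 θ).ne'
      have hu' : u ^ θ ≠ 0 := (Real.rpow_pos_of_pos hu θ).ne'
      rw [mul_comm u t]
      rw [h1]
      field_simp
  rw [← hval]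
  apply hmain.congr'
  filter_upwards [self_mem_nhdsWithin] with u hu
  rw [integral_div]

end AuxGaussian

/-- Bivariate Normal lower tail dependence: if
λ(u) = 2Φ(Φ⁻¹(u)√((1-ρ)/(1+ρ))) ~ u^θ L(u) with θ = (1-ρ)/(1+ρ) and L slowly
varying at 0, then the Gaussian copula diagonal satisfies
C(u,u)/u ~ u^θ L(u)/(θ+1) as u → 0⁺. -/
theorem gaussian_copula_tail_dependence
    (Φ PhiInv L C : ℝ → ℝ) (ρ : ℝ) (hρ : ρ ∈ Set.Ioo (-1 : ℝ) 1)
    (hΦ : ∀ x, Φ x = ∫ t in Set.Iic x, Real.exp (-t ^ 2 / 2) / Real.sqrt (2 * Real.pi))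
    (hinv : ∀ u ∈ Set.Ioo (0:ℝ) 1, Φ (PhiInv u) = u)
    (hC : ∀ u, C u = ∫ p in Set.Iic (PhiInv u) ×ˢ Set.Iic (PhiInv u),
      (1 / (2 * Real.pi * Real.sqrt (1 - ρ ^ 2))) *
        Real.exp (-(p.1 ^ 2 - 2 * ρ * p.1 * p.2 + p.2 ^ 2) / (2 * (1 - ρ ^ 2))))
    (hLpos : ∀ w > 0, 0 < L w)
    (hL_slow : ∀ l > 0, Tendsto (fun w => L (l * w) / L w) (𝓝[>] (0:ℝ)) (𝓝 1))
    (hlam : Tendsto (fun u =>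
        (2 * Φ (PhiInv u * Real.sqrt ((1 - ρ) / (1 + ρ)))) /
        (u ^ ((1 - ρ) / (1 + ρ)) * L u)) (𝓝[>] (0:ℝ)) (𝓝 1)) :
    Tendsto (fun u =>
        (C u / u) /
        (u ^ ((1 - ρ) / (1 + ρ)) * L u / ((1 - ρ) / (1 + ρ) + 1)))
      (𝓝[>] (0:ℝ)) (𝓝 1) := by
  obtain ⟨h1, h2⟩ := hρ
  have hPhi : Φ = stdPhi := by
    funext x; rw [hΦ x]; rfl
  subst hPhi
  set θ : ℝ := (1 - ρ) / (1 + ρ) with hθdef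
  have hθ : 0 < θ := div_pos (by linarith) (by linarith)
  set κ : ℝ := Real.sqrt ((1 - ρ) / (1 + ρ)) with hκdef
  set N : ℝ → ℝ := fun s => if s ≤ 0 then 0 else if s < 1 then 2 * stdPhi (PhiInv s * κ) else 2
    with hNdef
  have hNIoo : ∀ s ∈ Set.Ioo (0:ℝ) 1, N s = 2 * stdPhi (PhiInv s * κ) := by
    intro s hs
    simp only [hNdef, if_neg (not_le.2 hs.1), if_pos hs.2]
  have hN0 : ∀ s, 0 ≤ N s := by
    intro s
    simp only [hNdef]
    split
    · exact le_refl 0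
    · split
      · linarith [stdPhi_pos (PhiInv s * κ)]
      · norm_num
  have hNmono : Monotone N := by
    intro s s' hss
    by_cases h0 : s ≤ 0
    · calc N s = 0 := by simp only [hNdef, if_pos h0]
        _ ≤ N s' := hN0 s'
    · have h0' : ¬ s' ≤ 0 := fun h => h0 (hss.trans h)
      by_cases hs1 : s < 1
      · by_cases hs'1 : s' < 1
        · simp only [hNdef, if_neg h0, if_neg h0', if_pos hs1, if_pos hs'1]
          have hP : PhiInv s ≤ PhiInv s' := by
            apply stdPhi_strictMono.le_iff_le.1
            rw [hinv s ⟨not_le.1 h0, hs1⟩, hinv s' ⟨not_le.1 h0', hs'1⟩]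
            exact hss
          have hmul : PhiInv s * κ ≤ PhiInv s' * κ :=
            mul_le_mul_of_nonneg_right hP (Real.sqrt_nonneg _)
          linarith [stdPhi_strictMono.monotone hmul]
        · simp only [hNdef, if_neg h0, if_neg h0', if_pos hs1, if_neg hs'1]
          linarith [stdPhi_lt_one (PhiInv s * κ)]
      · have hs'1 : ¬ s' < 1 := fun h => hs1 (lt_of_le_of_lt hss h)
        simp only [hNdef, if_neg h0, if_neg h0', if_neg hs1, if_neg hs'1]
        exact le_refl 2
  have hmemIoo : Set.Ioo (0:ℝ) 1 ∈ 𝓝[>] (0:ℝ) :=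
    Ioo_mem_nhdsGT_of_mem ⟨le_refl 0, zero_lt_one⟩
  have hlamN : Tendsto (fun u => N u / (u ^ θ * L u)) (𝓝[>] (0:ℝ)) (𝓝 1) := by
    apply hlam.congr'
    filter_upwards [hmemIoo] with u hu
    rw [hNIoo u hu]
  have hQ := karamata_light θ hθ N L hNmono hN0 hLpos hL_slow hlamN
  have hfinal := (tendsto_const_nhds (x := θ + 1) (f := 𝓝[>] (0:ℝ))).mul hQ
  have hθ1 : θ + 1 ≠ 0 := by linarith
  rw [show (θ + 1) * (1 / (θ + 1)) = 1 by field_simp] at hfinal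
  apply hfinal.congr'
  filter_upwards [hmemIoo] with u hu
  have hCu : C u = ∫ s in Set.Ioc (0:ℝ) u, N s := by
    rw [hC u]
    exact copula_eq PhiInv hinv h1 h2 hu N hNIoo
  have hIoc : (∫ s in Set.Ioc (0:ℝ) u, N s) = u * ∫ t in Set.Ioc (0:ℝ) 1, N (u * t) := by
    rw [← intervalIntegral.integral_of_le hu.1.le,
      ← intervalIntegral.integral_of_le (zero_le_one) (f := fun t => N (u * t)),
      intervalIntegral.integral_comp_mul_left N hu.1.ne']
    simp only [mul_zero, mul_one, smul_eq_mul]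
    field_simp [hu.1.ne']
  rw [hCu, hIoc, mul_div_cancel_left₀ _ hu.1.ne', div_div_eq_mul_div]
  ring
end
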